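/- arXiv:2005.09186 — 12 statements merged into one kernel-verified Lean document; each statement's English description precedes it below -/
import Mathlib

section
/- Let A = {a1 < a2 < ...} and B = {b1 < b2 < b3 < ...} be two infinite sequences of positive integers with b1 > 1 such that P(A) = ℕ \ B. If 3·b1 + 5 ≤ b2 ≤ 6·b1 + 10, then b3 ≥ b2 + b1 + 1. -/
/-- The set of all finite subset sums of a set of positive integers
(finite sums of distinct elements; the empty sum 0 is included). -/
def subsetSums (S : Set ℕ) : Set ℕ :=
  {n | ∃ F : Finset ℕ, ↑F ⊆ S ∧ ∑ x ∈ F, x = n}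

/-- If `P(A) = ℕ \ B`, `b₁ > 1` and `3b₁+5 ≤ b₂ ≤ 6b₁+10`, then `b₃ ≥ b₂+b₁+1`.
Here `a i`, `b i` are the `(i+1)`-st elements of `A`, `B`. -/
theorem stmt0 (a b : ℕ → ℕ) (ha : StrictMono a) (hapos : ∀ i, 0 < a i)
    (hb : StrictMono b) (hb1 : 1 < b 0)
    (hPA : subsetSums (Set.range a) = Set.univ \ Set.range b)
    (hlow : 3 * b 0 + 5 ≤ b 1) (hhigh : b 1 ≤ 6 * b 0 + 10) :
    b 2 ≥ b 1 + b 0 + 1 := by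
  classical
  by_contra hcon
  push_neg at hcon
  set β := b 0 with hβ
  set m := b 1 with hm
  set c := b 2 with hc
  have hβm : β < m := hb (by norm_num)
  have hmc : m < c := hb (by norm_num)
  have hcm : c ≤ m + β := by omega
  have hB3 : ∀ k, 3 ≤ k → c < b k := fun k hk => hb (by omega)
  have hbelow : ∀ n, n ≤ c → n ≠ β → n ≠ m → n ≠ c → ∀ k, b k ≠ n := by
    intro n hle h0 h1 h2 k hk
    rcases k with _ | _ | _ | k
    · exact h0 ((hβ.trans hk).symm)
    · exact h1 ((hm.trans hk).symm)
    · exact h2 ((hc.trans hk).symm)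
    · have h5 := hB3 (k+3) (by omega)
      have hk' : b (k+3) = n := hk
      omega
  have hPne : ∀ (F : Finset ℕ), ↑F ⊆ Set.range a → ∀ k, b k ≠ ∑ x ∈ F, x := by
    intro F hF k hk
    have hmem : (∑ x ∈ F, x) ∈ subsetSums (Set.range a) := ⟨F, hF, rfl⟩
    rw [hPA] at hmem
    exact hmem.2 ⟨k, hk⟩
  have hrep : ∀ n, n ≤ c → n ≠ β → n ≠ m → n ≠ c →
      ∃ F : Finset ℕ, ↑F ⊆ Set.range a ∧ ∑ x ∈ F, x = n := by
    intro n hle h0 h1 h2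
    have hmem : n ∈ subsetSums (Set.range a) := by
      rw [hPA]
      refine ⟨Set.mem_univ n, ?_⟩
      rintro ⟨k, hk⟩
      exact hbelow n hle h0 h1 h2 k hk
    exact hmem
  have hsum0 : ∀ (F : Finset ℕ), ↑F ⊆ Set.range a → ∑ x ∈ F, x ≠ β := by
    intro F hF h
    exact hPne F hF 0 (by omega)
  have hsum1 : ∀ (F : Finset ℕ), ↑F ⊆ Set.range a → ∑ x ∈ F, x ≠ m := by
    intro F hF h
    exact hPne F hF 1 (by omega)
  have hsum2 : ∀ (F : Finset ℕ), ↑F ⊆ Set.range a → ∑ x ∈ F, x ≠ c := by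
    intro F hF h
    exact hPne F hF 2 (by omega)
  have hel : ∀ x ∈ Set.range a, x ≠ β ∧ x ≠ m ∧ x ≠ c := by
    intro x hx
    have hs : ↑({x} : Finset ℕ) ⊆ Set.range a := by simpa using hx
    have h0 := hsum0 {x} hs
    have h1 := hsum1 {x} hs
    have h2 := hsum2 {x} hs
    simp only [Finset.sum_singleton] at h0 h1 h2
    exact ⟨h0, h1, h2⟩
  -- all small elements of A sum to less than β
  have lemma1 : ∀ n (F : Finset ℕ), F.card ≤ n → ↑F ⊆ Set.range a →
      (∀ x ∈ F, x < β) → ∑ x ∈ F, x < β := by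
    intro n
    induction n with
    | zero =>
      intro F hcard hF hsm
      have hFe : F = ∅ := Finset.card_eq_zero.mp (Nat.le_zero.mp hcard)
      subst hFe
      simp only [Finset.sum_empty]
      omega
    | succ n ih =>
      intro F hcard hF hsm
      by_contra hge
      push_neg at hge
      have hne : F.Nonempty := by
        rcases Finset.eq_empty_or_nonempty F with h | h
        · subst h; simp only [Finset.sum_empty] at hge; omega
        · exact h
      set x := F.min' hne with hxdef
      have hxF : x ∈ F := F.min'_mem hne
      have herase : ∑ y ∈ F.erase x, y + x = ∑ y ∈ F, y := Finset.sum_erase_add F _ hxF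
      have hcard' : (F.erase x).card ≤ n := by
        have := Finset.card_erase_of_mem hxF
        omega
      have hsub' : ↑(F.erase x) ⊆ Set.range a :=
        Set.Subset.trans (Finset.coe_subset.mpr (Finset.erase_subset _ _)) hF
      have hsm' : ∀ y ∈ F.erase x, y < β := fun y hy => hsm y (Finset.mem_of_mem_erase hy)
      have hlt : ∑ y ∈ F.erase x, y < β := ih (F.erase x) hcard' hsub' hsm'
      have hFne : ∑ y ∈ F, y ≠ β := hsum0 F hF
      have hxβ : x < β := hsm x hxF
      set w := β - ∑ y ∈ F.erase x, y with hwdef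
      obtain ⟨H, hH, hHs⟩ := hrep w (by omega) (by omega) (by omega) (by omega)
      have hHlt : ∀ y ∈ H, y < x := by
        intro y hy
        have hyw : y ≤ ∑ z ∈ H, z := Finset.single_le_sum (fun i _ => Nat.zero_le i) hy
        omega
      have hdisj : Disjoint (F.erase x) H := by
        rw [Finset.disjoint_left]
        intro y hy hyH
        have h1 : x ≤ y := F.min'_le y (Finset.mem_of_mem_erase hy)
        have h2 := hHlt y hyH
        omega
      have hUsub : ↑(F.erase x ∪ H) ⊆ Set.range a := by
        rw [Finset.coe_union]
        exact Set.union_subset hsub' hH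
      have hUsum : ∑ y ∈ F.erase x ∪ H, y = β := by
        rw [Finset.sum_union hdisj, hHs]
        omega
      exact hsum0 _ hUsub hUsum
  -- padding lemma
  have hpad : ∀ (G : Finset ℕ), ↑G ⊆ Set.range a → (∀ x ∈ G, β < x) → ∀ t, t < β →
      ∃ U : Finset ℕ, ↑U ⊆ Set.range a ∧ ∑ x ∈ U, x = ∑ x ∈ G, x + t := by
    intro G hG hbig t ht
    obtain ⟨H, hH, hHs⟩ := hrep t (by omega) (by omega) (by omega) (by omega)
    have hdisj : Disjoint G H := by
      rw [Finset.disjoint_left]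
      intro y hy hyH
      have h1 := hbig y hy
      have h2 : y ≤ ∑ z ∈ H, z := Finset.single_le_sum (fun i _ => Nat.zero_le i) hyH
      omega
    refine ⟨G ∪ H, ?_, ?_⟩
    · rw [Finset.coe_union]
      exact Set.union_subset hG hH
    · rw [Finset.sum_union hdisj, hHs]
  have hitm : ∀ (G : Finset ℕ), ↑G ⊆ Set.range a → (∀ x ∈ G, β < x) →
      m < ∑ x ∈ G, x + β → ∑ x ∈ G, x ≤ m → False := by
    intro G hG hbig h1 h2
    obtain ⟨U, hU, hUs⟩ := hpad G hG hbig (m - ∑ x ∈ G, x) (by omega)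
    exact hsum1 U hU (by omega)
  have hitc : ∀ (G : Finset ℕ), ↑G ⊆ Set.range a → (∀ x ∈ G, β < x) →
      c < ∑ x ∈ G, x + β → ∑ x ∈ G, x ≤ c → False := by
    intro G hG hbig h1 h2
    obtain ⟨U, hU, hUs⟩ := hpad G hG hbig (c - ∑ x ∈ G, x) (by omega)
    exact hsum2 U hU (by omega)
  -- big part extraction
  have hbigpart : ∀ v, β < v → v ≤ c → v ≠ m → v ≠ c →
      ∃ G : Finset ℕ, ↑G ⊆ Set.range a ∧ (∀ x ∈ G, β < x) ∧
        ∑ x ∈ G, x ≤ v ∧ v < ∑ x ∈ G, x + β := by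
    intro v h1 h2 h3 h4
    obtain ⟨F, hF, hFs⟩ := hrep v h2 (by omega) h3 h4
    set G := F.filter (fun x => β < x) with hGdef
    set Fsm := F.filter (fun x => ¬ β < x) with hFsmdef
    have hsplit : ∑ x ∈ G, x + ∑ x ∈ Fsm, x = ∑ x ∈ F, x :=
      Finset.sum_filter_add_sum_filter_not F _ _
    have hGsub : ↑G ⊆ Set.range a :=
      Set.Subset.trans (Finset.coe_subset.mpr (Finset.filter_subset _ F)) hF
    have hGbig : ∀ x ∈ G, β < x := fun x hx => (Finset.mem_filter.mp hx).2
    have hFsmsub : ↑Fsm ⊆ Set.range a :=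
      Set.Subset.trans (Finset.coe_subset.mpr (Finset.filter_subset _ F)) hF
    have hFsmall : ∀ x ∈ Fsm, x < β := by
      intro x hx
      have hx2 := (Finset.mem_filter.mp hx).2
      have hxA : x ∈ Set.range a := hFsmsub hx
      have := hel x hxA
      omega
    have hsm : ∑ x ∈ Fsm, x < β := lemma1 Fsm.card Fsm le_rfl hFsmsub hFsmall
    exact ⟨G, hGsub, hGbig, by omega, by omega⟩
  -- c = m+1
  have hceq : c = m + 1 := by
    by_contra hne
    obtain ⟨G, hGsub, hGbig, hGle, hGgt⟩ :=
      hbigpart (m+1) (by omega) (by omega) (by omega) (by omega)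
    rcases Nat.lt_or_ge (∑ x ∈ G, x) (m+1) with h | h
    · exact hitm G hGsub hGbig (by omega) (by omega)
    · exact hitc G hGsub hGbig (by omega) (by omega)
  -- the window lemma
  have hitW : ∀ (G : Finset ℕ), ↑G ⊆ Set.range a → (∀ x ∈ G, β < x) →
      m < ∑ x ∈ G, x + β → ∑ x ∈ G, x ≤ m + 1 → False := by
    intro G hG hbig h1 h2
    rcases Nat.lt_or_ge (∑ x ∈ G, x) (m+1) with h | h
    · exact hitm G hG hbig h1 (by omega)
    · exact hitc G hG hbig (by omega) (by omega)
  -- push lemma : insert an outside element into a subset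
  have hpush : ∀ (K : Finset ℕ), ↑K ⊆ Set.range a → (∀ x ∈ K, β < x) →
      ∀ e, e ∈ Set.range a → β < e → e ∉ K →
      ∀ K' : Finset ℕ, K' ⊆ K → m < e + ∑ x ∈ K', x + β → e + ∑ x ∈ K', x ≤ m + 1 → False := by
    intro K hKsub hKbig e heA hebig heK K' hK' hg1 hg2
    have heK' : e ∉ K' := fun h => heK (hK' h)
    have hs : ∑ x ∈ insert e K', x = e + ∑ x ∈ K', x := Finset.sum_insert heK'
    refine hitW (insert e K') ?_ ?_ (by omega) (by omega)
    · rw [Finset.coe_insert]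
      exact Set.insert_subset_iff.mpr ⟨heA,
        Set.Subset.trans (Finset.coe_subset.mpr hK') hKsub⟩
    · intro x hx
      rcases Finset.mem_insert.mp hx with rfl | hx'
      · exact hebig
      · exact hKbig x (hK' hx')
  -- β+1 is an element of A
  have hβ1A : β + 1 ∈ Set.range a := by
    obtain ⟨G, hGsub, hGbig, hGle, hGgt⟩ :=
      hbigpart (β+1) (by omega) (by omega) (by omega) (by omega)
    have hne : G.Nonempty := by
      rcases Finset.eq_empty_or_nonempty G with h | h
      · subst h; simp only [Finset.sum_empty] at hGgt; omega
      · exact h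
    obtain ⟨x, hx⟩ := hne
    have hxle : x ≤ ∑ y ∈ G, y := Finset.single_le_sum (fun i _ => Nat.zero_le i) hx
    have hxbig := hGbig x hx
    have hxeq : x = β + 1 := by omega
    exact hxeq ▸ hGsub hx
  -- element c2 ∈ [β+2, 2β+1]
  obtain ⟨G2, hG2sub, hG2big, hG2le, hG2gt⟩ :=
    hbigpart (2*β+1) (by omega) (by omega) (by omega) (by omega)
  have hG2ne : G2.Nonempty := by
    rcases Finset.eq_empty_or_nonempty G2 with h | h
    · subst h; simp only [Finset.sum_empty] at hG2gt; omega
    · exact h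
  obtain ⟨c2, hc2G2⟩ := hG2ne
  have hc2A : c2 ∈ Set.range a := hG2sub hc2G2
  have hc2big : β < c2 := hG2big c2 hc2G2
  have herase2 : ∑ x ∈ G2.erase c2, x + c2 = ∑ x ∈ G2, x := Finset.sum_erase_add _ _ hc2G2
  have hG2r0 : ∑ x ∈ G2.erase c2, x = 0 := by
    by_contra h0
    have hne' : (G2.erase c2).Nonempty := by
      rcases Finset.eq_empty_or_nonempty (G2.erase c2) with h | h
      · exact absurd (by rw [h, Finset.sum_empty]) h0
      · exact h
    obtain ⟨y, hy⟩ := hne'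
    have hybig : β < y := hG2big y (Finset.mem_of_mem_erase hy)
    have hyle : y ≤ ∑ z ∈ G2.erase c2, z := Finset.single_le_sum (fun i _ => Nat.zero_le i) hy
    omega
  have hc2l : β + 2 ≤ c2 := by omega
  have hc2u : c2 ≤ 2*β + 1 := by omega
  -- key lemmas
  have hkey2 : ∀ (K : Finset ℕ), ↑K ⊆ Set.range a → (∀ x ∈ K, β < x) →
      m ≤ ∑ x ∈ K, x + 2*β → ∑ x ∈ K, x + β ≤ m → β + 1 ∈ K →
      ∀ e, e ∈ Set.range a → β < e → e ∉ K → m + β + 3 ≤ ∑ x ∈ K, x + e := by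
    intro K hKsub hKbig hKlo hKhi hβ1K e heA hebig heK
    have h1 : ∑ x ∈ K.erase (β+1), x + (β+1) = ∑ x ∈ K, x :=
      Finset.sum_erase_add _ _ hβ1K
    have s1 : m + 2 ≤ ∑ x ∈ K, x + e := by
      by_contra h; push_neg at h
      exact hpush K hKsub hKbig e heA hebig heK K (Finset.Subset.refl K) (by omega) (by omega)
    by_contra h; push_neg at h
    exact hpush K hKsub hKbig e heA hebig heK (K.erase (β+1)) (Finset.erase_subset _ _)
      (by omega) (by omega)
  have hkey : ∀ (K : Finset ℕ), ↑K ⊆ Set.range a → (∀ x ∈ K, β < x) →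
      m ≤ ∑ x ∈ K, x + 2*β → ∑ x ∈ K, x + β ≤ m → β + 1 ∈ K → c2 ∈ K →
      ∀ e, e ∈ Set.range a → β < e → e ∉ K → m + β + 3 + c2 ≤ ∑ x ∈ K, x + e := by
    intro K hKsub hKbig hKlo hKhi hβ1K hc2K e heA hebig heK
    have s2 := hkey2 K hKsub hKbig hKlo hKhi hβ1K e heA hebig heK
    have h1 : ∑ x ∈ K.erase (β+1), x + (β+1) = ∑ x ∈ K, x :=
      Finset.sum_erase_add _ _ hβ1K
    have h2 : ∑ x ∈ K.erase c2, x + c2 = ∑ x ∈ K, x :=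
      Finset.sum_erase_add _ _ hc2K
    have hc2K' : c2 ∈ K.erase (β+1) := Finset.mem_erase.mpr ⟨by omega, hc2K⟩
    have h3 : ∑ x ∈ (K.erase (β+1)).erase c2, x + c2 = ∑ x ∈ K.erase (β+1), x :=
      Finset.sum_erase_add _ _ hc2K'
    have s3 : m + 2 + c2 ≤ ∑ x ∈ K, x + e := by
      by_contra h; push_neg at h
      exact hpush K hKsub hKbig e heA hebig heK (K.erase c2) (Finset.erase_subset _ _)
        (by omega) (by omega)
    by_contra h; push_neg at h
    exact hpush K hKsub hKbig e heA hebig heK ((K.erase (β+1)).erase c2)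
      (Finset.Subset.trans (Finset.erase_subset _ _) (Finset.erase_subset _ _))
      (by omega) (by omega)
  -- big-only representation FS with sum m - β
  obtain ⟨FS, hFsub, hFbig, hFle, hFgt⟩ :=
    hbigpart (m-1) (by omega) (by omega) (by omega) (by omega)
  have hFSm : ∑ x ∈ FS, x + β = m := by
    by_contra h
    exact hitW FS hFsub hFbig (by omega) (by omega)
  have hβ1FS : β + 1 ∈ FS := by
    by_contra hn
    exact hpush FS hFsub hFbig (β+1) hβ1A (by omega) hn FS (Finset.Subset.refl FS)
      (by omega) (by omega)
  have hFe1 : ∑ x ∈ FS.erase (β+1), x + (β+1) = ∑ x ∈ FS, x :=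
    Finset.sum_erase_add _ _ hβ1FS
  have hc2FS : c2 ∈ FS := by
    by_contra hn
    exact hpush FS hFsub hFbig c2 hc2A (by omega) hn (FS.erase (β+1))
      (Finset.erase_subset _ _) (by omega) (by omega)
  -- big-only representation GS with sum in [m-2β, m-β-1]
  obtain ⟨GS, hGsub', hGbig', hGle', hGgt'⟩ :=
    hbigpart (m-β-1) (by omega) (by omega) (by omega) (by omega)
  have hβ1GS : β + 1 ∈ GS := by
    by_contra hn
    exact hpush GS hGsub' hGbig' (β+1) hβ1A (by omega) hn GS (Finset.Subset.refl GS)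
      (by omega) (by omega)
  have hc2GS : c2 ∈ GS := by
    by_contra hn
    have := hkey2 GS hGsub' hGbig' (by omega) (by omega) hβ1GS c2 hc2A (by omega) hn
    omega
  -- d ∈ FS \ GS
  have hdex : ∃ d ∈ FS, d ∉ GS := by
    by_contra h
    push_neg at h
    have hsub : FS ⊆ GS := fun x hx => h x hx
    have hss : ∑ x ∈ FS, x ≤ ∑ x ∈ GS, x := Finset.sum_le_sum_of_subset hsub
    omega
  obtain ⟨d, hdFS, hdGS⟩ := hdex
  have hdA : d ∈ Set.range a := hFsub hdFS
  have hdbig : β < d := hFbig d hdFS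
  have hd1 : m + β + 3 + c2 ≤ ∑ x ∈ GS, x + d :=
    hkey GS hGsub' hGbig' (by omega) (by omega) hβ1GS hc2GS d hdA hdbig hdGS
  have hdlow : 2*β + 4 + c2 ≤ d := by omega
  -- R = FS minus {β+1, c2}
  have hc2FS' : c2 ∈ FS.erase (β+1) := Finset.mem_erase.mpr ⟨by omega, hc2FS⟩
  have hFe2 : ∑ x ∈ (FS.erase (β+1)).erase c2, x + c2 = ∑ x ∈ FS.erase (β+1), x :=
    Finset.sum_erase_add _ _ hc2FS'
  have hdR : d ∈ (FS.erase (β+1)).erase c2 :=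
    Finset.mem_erase.mpr ⟨by omega, Finset.mem_erase.mpr ⟨by omega, hdFS⟩⟩
  have hdle : d ≤ ∑ x ∈ (FS.erase (β+1)).erase c2, x :=
    Finset.single_le_sum (fun i _ => Nat.zero_le i) hdR
  have hc2eq : c2 = β + 2 := by omega
  have hσ1 : 5*β + 8 ≤ ∑ x ∈ GS, x := by omega
  -- element g of GS other than β+1, c2
  have hGr1 : ∑ x ∈ GS.erase (β+1), x + (β+1) = ∑ x ∈ GS, x :=
    Finset.sum_erase_add _ _ hβ1GS
  have hc2GS' : c2 ∈ GS.erase (β+1) := Finset.mem_erase.mpr ⟨by omega, hc2GS⟩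
  have hGr2 : ∑ x ∈ (GS.erase (β+1)).erase c2, x + c2 = ∑ x ∈ GS.erase (β+1), x :=
    Finset.sum_erase_add _ _ hc2GS'
  have hRGne : ((GS.erase (β+1)).erase c2).Nonempty := by
    rcases Finset.eq_empty_or_nonempty ((GS.erase (β+1)).erase c2) with h | h
    · rw [h] at hGr2
      simp only [Finset.sum_empty] at hGr2
      omega
    · exact h
  obtain ⟨g, hgRG⟩ := hRGne
  have hgGS : g ∈ GS := Finset.mem_of_mem_erase (Finset.mem_of_mem_erase hgRG)
  have hgc2 : g ≠ c2 := (Finset.mem_erase.mp hgRG).1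
  have hgβ1 : g ≠ β + 1 := (Finset.mem_erase.mp (Finset.mem_of_mem_erase hgRG)).1
  have hgA : g ∈ Set.range a := hGsub' hgGS
  have hgbig : β < g := hGbig' g hgGS
  have hgd : g ≠ d := fun h => hdGS (h ▸ hgGS)
  have hgFS : g ∉ FS := by
    intro hgF
    have hgR : g ∈ (FS.erase (β+1)).erase c2 :=
      Finset.mem_erase.mpr ⟨hgc2, Finset.mem_erase.mpr ⟨hgβ1, hgF⟩⟩
    have hgR' : g ∈ ((FS.erase (β+1)).erase c2).erase d := Finset.mem_erase.mpr ⟨hgd, hgR⟩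
    have h1 : ∑ x ∈ ((FS.erase (β+1)).erase c2).erase d, x + d
        = ∑ x ∈ (FS.erase (β+1)).erase c2, x := Finset.sum_erase_add _ _ hdR
    have h2 : g ≤ ∑ x ∈ ((FS.erase (β+1)).erase c2).erase d, x :=
      Finset.single_le_sum (fun i _ => Nat.zero_le i) hgR'
    omega
  have hglow : 3*β + 5 ≤ g := by
    have := hkey FS hFsub hFbig (by omega) (by omega) hβ1FS hc2FS g hgA hgbig hgFS
    omega
  -- final contradiction : representation of 3β+4
  obtain ⟨Q, hQsub, hQbig, hQle, hQgt⟩ :=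
    hbigpart (3*β+4) (by omega) (by omega) (by omega) (by omega)
  have hQmem : ∀ x ∈ Q, x = β+1 ∨ x = β+2 := by
    intro x hx
    have hxA := hQsub hx
    have hxbig := hQbig x hx
    have hxle : x ≤ ∑ y ∈ Q, y := Finset.single_le_sum (fun i _ => Nat.zero_le i) hx
    by_contra hxor
    push_neg at hxor
    have hxFS : x ∈ FS := by
      by_contra hn
      have := hkey FS hFsub hFbig (by omega) (by omega) hβ1FS hc2FS x hxA hxbig hn
      omega
    have hxR : x ∈ (FS.erase (β+1)).erase c2 :=
      Finset.mem_erase.mpr ⟨by omega, Finset.mem_erase.mpr ⟨by omega, hxFS⟩⟩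
    by_cases hxd : x = d
    · omega
    · have hxR' : x ∈ ((FS.erase (β+1)).erase c2).erase d := Finset.mem_erase.mpr ⟨hxd, hxR⟩
      have h1 : ∑ y ∈ ((FS.erase (β+1)).erase c2).erase d, y + d
          = ∑ y ∈ (FS.erase (β+1)).erase c2, y := Finset.sum_erase_add _ _ hdR
      have h2 : x ≤ ∑ y ∈ ((FS.erase (β+1)).erase c2).erase d, y :=
        Finset.single_le_sum (fun i _ => Nat.zero_le i) hxR'
      omega
  have hQsub2 : Q ⊆ ({β+1, β+2} : Finset ℕ) := by
    intro x hx
    rcases hQmem x hx with h | h <;> simp [h]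
  have hQsumle : ∑ x ∈ Q, x ≤ ∑ x ∈ ({β+1, β+2} : Finset ℕ), x :=
    Finset.sum_le_sum_of_subset hQsub2
  have hpairsum : ∑ x ∈ ({β+1, β+2} : Finset ℕ), x = 2*β + 3 := by
    rw [Finset.sum_pair (by omega : β + 1 ≠ β + 2)]
    omega
  omega
end

section
/- For every integer b1 with b1 ∈ {4, 7, 8} or b1 ≥ 11, and every integer b2 with 3·b1 + 5 ≤ b2 ≤ 6·b1 + 10, there exist an infinite set A of positive integers and an infinite set B of positive integers whose three smallest elements are b1 < b2 < b3 with b3 = b2 + b1 + 1, such that P(A) = ℕ \ B. -/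
namespace Stmt1Aux



lemma mem_sums_insert (a : ℕ) (F : Finset ℕ) (ha : a ∉ F) (n : ℕ) :
    n ∈ subsetSums ↑(insert a F) ↔
      n ∈ subsetSums (↑F : Set ℕ) ∨ ∃ m, m ∈ subsetSums (↑F : Set ℕ) ∧ n = m + a := by
  constructor
  · rintro ⟨G, hG, rfl⟩
    have hG' : G ⊆ insert a F := by exact_mod_cast hG
    by_cases hag : a ∈ G
    · right
      have hsub : G.erase a ⊆ F := by
        intro x hx
        rcases Finset.mem_insert.mp (hG' (Finset.mem_of_mem_erase hx)) with h | h
        · exact absurd h (Finset.ne_of_mem_erase hx)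
        · exact h
      exact ⟨∑ x ∈ G.erase a, x, ⟨G.erase a, by exact_mod_cast hsub, rfl⟩,
        (Finset.sum_erase_add G (fun x => x) hag).symm⟩
    · left
      have hsub : G ⊆ F := by
        intro x hx
        rcases Finset.mem_insert.mp (hG' hx) with h | h
        · exact absurd (h ▸ hx) hag
        · exact h
      exact ⟨G, by exact_mod_cast hsub, rfl⟩
  · rintro (⟨G, hG, rfl⟩ | ⟨m, ⟨G, hG, rfl⟩, rfl⟩)
    · exact ⟨G, hG.trans (by exact_mod_cast Finset.subset_insert a F), rfl⟩
    · have hGF : G ⊆ F := by exact_mod_cast hG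
      have haG : a ∉ G := fun h => ha (hGF h)
      exact ⟨insert a G, by exact_mod_cast Finset.insert_subset_insert a hGF,
        by rw [Finset.sum_insert haG, Nat.add_comm]⟩

lemma exists_shift (Q : ℕ → Prop) (a n : ℕ) :
    (∃ m, Q m ∧ n = m + a) ↔ (a ≤ n ∧ Q (n - a)) := by
  constructor
  · rintro ⟨m, hm, rfl⟩
    exact ⟨Nat.le_add_left a m, by simpa using hm⟩
  · rintro ⟨h1, h2⟩
    exact ⟨n - a, h2, by omega⟩

def listSums : List ℕ → Finset ℕ
  | [] => {0}
  | a :: l => listSums l ∪ (listSums l).image (· + a)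

lemma listSums_correct (l : List ℕ) (hl : l.Nodup) (n : ℕ) :
    n ∈ subsetSums ↑l.toFinset ↔ n ∈ listSums l := by
  induction l generalizing n with
  | nil =>
    simp only [List.toFinset_nil, listSums, Finset.mem_singleton]
    constructor
    · rintro ⟨G, hG, rfl⟩
      have : G = ∅ := Finset.subset_empty.mp (by exact_mod_cast hG)
      simp [this]
    · rintro rfl
      exact ⟨∅, by simp⟩
  | cons a l ih =>
    rcases List.nodup_cons.mp hl with ⟨hal, hnd⟩
    rw [List.toFinset_cons, mem_sums_insert a l.toFinset (by simpa using hal)]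
    simp only [ih hnd, listSums, Finset.mem_union, Finset.mem_image]
    apply or_congr Iff.rfl
    constructor
    · rintro ⟨m, h1, rfl⟩; exact ⟨m, h1, rfl⟩
    · rintro ⟨m, h1, rfl⟩; exact ⟨m, h1, rfl⟩

lemma sum_range_two_pow (k : ℕ) : ∑ j ∈ Finset.range k, 2 ^ j = 2 ^ k - 1 := by
  induction k with
  | zero => simp
  | succ k ih =>
    rw [Finset.sum_range_succ, ih, pow_succ]
    have : 1 ≤ 2 ^ k := Nat.one_le_pow _ _ (by norm_num)
    omega


lemma cover_of_list (n : ℕ) (l : List ℕ) (hnd : l.Nodup)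
    (hl : listSums l = Finset.range (n + 1))
    (hb : ∀ x ∈ l, 0 < x ∧ 2 * x ≤ n + 2) :
    ∃ G : Finset ℕ, (∀ x ∈ G, 0 < x ∧ 2 * x ≤ n + 2) ∧
      ∀ m, m ∈ subsetSums ↑G ↔ m ≤ n := by
  refine ⟨l.toFinset, ?_, ?_⟩
  · intro x hx; exact hb x (List.mem_toFinset.mp hx)
  · intro m
    rw [listSums_correct l hnd m, hl, Finset.mem_range]
    omega

lemma cover_exists (n : ℕ) (hn : n = 3 ∨ n = 6 ∨ n = 7 ∨ 10 ≤ n) :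
    ∃ G : Finset ℕ, (∀ x ∈ G, 0 < x ∧ 2 * x ≤ n + 2) ∧
      ∀ m, m ∈ subsetSums ↑G ↔ m ≤ n := by
  induction n using Nat.strong_induction_on with
  | _ n IH =>
    by_cases h21 : n ≤ 21
    · have hc : n = 3 ∨ n = 6 ∨ n = 7 ∨ n = 10 ∨ n = 11 ∨ n = 12 ∨ n = 13 ∨ n = 14 ∨
        n = 15 ∨ n = 16 ∨ n = 17 ∨ n = 18 ∨ n = 19 ∨ n = 20 ∨ n = 21 := by omega
      rcases hc with rfl|rfl|rfl|rfl|rfl|rfl|rfl|rfl|rfl|rfl|rfl|rfl|rfl|rfl|rfl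
      · exact cover_of_list _ [1, 2] (by decide) (by decide) (by decide)
      · exact cover_of_list _ [1, 2, 3] (by decide) (by decide) (by decide)
      · exact cover_of_list _ [1, 2, 4] (by decide) (by decide) (by decide)
      · exact cover_of_list _ [1, 2, 3, 4] (by decide) (by decide) (by decide)
      · exact cover_of_list _ [1, 2, 3, 5] (by decide) (by decide) (by decide)
      · exact cover_of_list _ [1, 2, 3, 6] (by decide) (by decide) (by decide)
      · exact cover_of_list _ [1, 2, 4, 6] (by decide) (by decide) (by decide)
      · exact cover_of_list _ [1, 2, 4, 7] (by decide) (by decide) (by decide)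
      · exact cover_of_list _ [1, 2, 3, 4, 5] (by decide) (by decide) (by decide)
      · exact cover_of_list _ [1, 2, 3, 4, 6] (by decide) (by decide) (by decide)
      · exact cover_of_list _ [1, 2, 3, 4, 7] (by decide) (by decide) (by decide)
      · exact cover_of_list _ [1, 2, 3, 4, 8] (by decide) (by decide) (by decide)
      · exact cover_of_list _ [1, 2, 3, 4, 9] (by decide) (by decide) (by decide)
      · exact cover_of_list _ [1, 2, 3, 4, 10] (by decide) (by decide) (by decide)
      · exact cover_of_list _ [1, 2, 3, 4, 11] (by decide) (by decide) (by decide)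
    · obtain ⟨G, hGb, hG⟩ := IH (n / 2) (by omega) (by omega)
      have fresh : (n - n / 2) ∉ G := by
        intro h
        have := (hGb _ h).2
        omega
      refine ⟨insert (n - n / 2) G, ?_, ?_⟩
      · intro x hx
        rcases Finset.mem_insert.mp hx with rfl | h
        · omega
        · have := hGb _ h; omega
      · intro m
        rw [mem_sums_insert _ _ fresh]
        simp only [hG, exists_shift]
        omega

lemma chain2 (b1 b2 e2 e3 : ℕ) (G : Finset ℕ)
    (hGb : ∀ x ∈ G, 0 < x ∧ 2 * x ≤ b1 + 1)
    (hG : ∀ m, m ∈ subsetSums ↑G ↔ m ≤ b1 - 1)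
    (hb : 4 ≤ b1) (hb2 : 3 * b1 + 5 ≤ b2)
    (h2a : b1 + 2 ≤ e2) (h2b : e2 ≤ 2 * b1 + 1)
    (h3a : b1 + 1 < e3) (h3b : e3 + b1 ≤ 2 * b1 + e2) (h3c : e3 ≠ e2)
    (hsum : 2 * b1 + e2 + e3 = b1 + b2) :
    ∃ F : Finset ℕ, (∀ x ∈ F, 0 < x) ∧
      ∀ n, n ∈ subsetSums ↑F ↔
        (n ≤ b1 + 2 * b2 + 1 ∧ n ≠ b1 ∧ n ≠ b2 ∧ n ≠ b1 + b2 + 1 ∧ n ≠ 2 * b2 + 1) := by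
  have fresh1 : b1 + 1 ∉ G := fun h => by have := (hGb _ h).2; omega
  have h1 : ∀ n, n ∈ subsetSums ↑(insert (b1 + 1) G) ↔ (n ≤ 2 * b1 ∧ n ≠ b1) := by
    intro n
    rw [mem_sums_insert _ _ fresh1]
    simp only [hG, exists_shift]
    omega
  have fresh2 : e2 ∉ insert (b1 + 1) G := by
    intro h
    rcases Finset.mem_insert.mp h with h | h
    · omega
    · have := (hGb _ h).2; omega
  have h2 : ∀ n, n ∈ subsetSums ↑(insert e2 (insert (b1 + 1) G)) ↔
      (n ≤ 2 * b1 + e2 ∧ n ≠ b1 ∧ n ≠ b1 + e2) := by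
    intro n
    rw [mem_sums_insert _ _ fresh2]
    simp only [h1, exists_shift]
    omega
  have fresh3 : e3 ∉ insert e2 (insert (b1 + 1) G) := by
    intro h
    rcases Finset.mem_insert.mp h with h | h
    · omega
    · rcases Finset.mem_insert.mp h with h | h
      · omega
      · have := (hGb _ h).2; omega
  have h3 : ∀ n, n ∈ subsetSums ↑(insert e3 (insert e2 (insert (b1 + 1) G))) ↔
      (n ≤ b1 + b2 ∧ n ≠ b1 ∧ n ≠ b2) := by
    intro n
    rw [mem_sums_insert _ _ fresh3]
    simp only [h2, exists_shift]
    omega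
  have fresh4 : b2 + 1 ∉ insert e3 (insert e2 (insert (b1 + 1) G)) := by
    intro h
    rcases Finset.mem_insert.mp h with h | h
    · omega
    · rcases Finset.mem_insert.mp h with h | h
      · omega
      · rcases Finset.mem_insert.mp h with h | h
        · omega
        · have := (hGb _ h).2; omega
  refine ⟨insert (b2 + 1) (insert e3 (insert e2 (insert (b1 + 1) G))), ?_, ?_⟩
  · intro x hx
    rcases Finset.mem_insert.mp hx with rfl | hx
    · omega
    rcases Finset.mem_insert.mp hx with rfl | hx
    · omega
    rcases Finset.mem_insert.mp hx with rfl | hx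
    · omega
    rcases Finset.mem_insert.mp hx with rfl | hx
    · omega
    · exact (hGb _ hx).1
  · intro n
    rw [mem_sums_insert _ _ fresh4]
    simp only [h3, exists_shift]
    omega

lemma chain3 (b1 b2 e2 e3 e4 : ℕ) (G : Finset ℕ)
    (hGb : ∀ x ∈ G, 0 < x ∧ 2 * x ≤ b1 + 1)
    (hG : ∀ m, m ∈ subsetSums ↑G ↔ m ≤ b1 - 1)
    (hb : 4 ≤ b1) (hb2 : 3 * b1 + 5 ≤ b2)
    (h2a : b1 + 2 ≤ e2) (h2b : e2 ≤ 2 * b1 + 1)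
    (h3a : b1 + 1 < e3) (h3b : e3 + b1 ≤ 2 * b1 + e2) (h3c : e3 ≠ e2) (h3d : e3 ≤ b1 + 4)
    (h4a : b1 + 1 < e4) (h4b : e4 + b1 ≤ 2 * b1 + e2 + e3) (h4c : e4 ≠ e2 + e3)
    (h4d : e4 ≠ e2) (h4e : e4 ≠ e3) (h4f : e4 ≤ 3 * b1 + 5)
    (hsum : 2 * b1 + e2 + e3 + e4 = b1 + b2) :
    ∃ F : Finset ℕ, (∀ x ∈ F, 0 < x) ∧
      ∀ n, n ∈ subsetSums ↑F ↔
        (n ≤ b1 + 2 * b2 + 1 ∧ n ≠ b1 ∧ n ≠ b2 ∧ n ≠ b1 + b2 + 1 ∧ n ≠ 2 * b2 + 1) := by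
  have fresh1 : b1 + 1 ∉ G := fun h => by have := (hGb _ h).2; omega
  have h1 : ∀ n, n ∈ subsetSums ↑(insert (b1 + 1) G) ↔ (n ≤ 2 * b1 ∧ n ≠ b1) := by
    intro n
    rw [mem_sums_insert _ _ fresh1]
    simp only [hG, exists_shift]
    omega
  have fresh2 : e2 ∉ insert (b1 + 1) G := by
    intro h
    rcases Finset.mem_insert.mp h with h | h
    · omega
    · have := (hGb _ h).2; omega
  have h2 : ∀ n, n ∈ subsetSums ↑(insert e2 (insert (b1 + 1) G)) ↔
      (n ≤ 2 * b1 + e2 ∧ n ≠ b1 ∧ n ≠ b1 + e2) := by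
    intro n
    rw [mem_sums_insert _ _ fresh2]
    simp only [h1, exists_shift]
    omega
  have fresh3 : e3 ∉ insert e2 (insert (b1 + 1) G) := by
    intro h
    rcases Finset.mem_insert.mp h with h | h
    · omega
    · rcases Finset.mem_insert.mp h with h | h
      · omega
      · have := (hGb _ h).2; omega
  have h3 : ∀ n, n ∈ subsetSums ↑(insert e3 (insert e2 (insert (b1 + 1) G))) ↔
      (n ≤ 2 * b1 + e2 + e3 ∧ n ≠ b1 ∧ n ≠ b1 + e2 + e3) := by
    intro n
    rw [mem_sums_insert _ _ fresh3]
    simp only [h2, exists_shift]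
    omega
  have fresh4 : e4 ∉ insert e3 (insert e2 (insert (b1 + 1) G)) := by
    intro h
    rcases Finset.mem_insert.mp h with h | h
    · omega
    · rcases Finset.mem_insert.mp h with h | h
      · omega
      · rcases Finset.mem_insert.mp h with h | h
        · omega
        · have := (hGb _ h).2; omega
  have h4 : ∀ n, n ∈ subsetSums ↑(insert e4 (insert e3 (insert e2 (insert (b1 + 1) G)))) ↔
      (n ≤ b1 + b2 ∧ n ≠ b1 ∧ n ≠ b2) := by
    intro n
    rw [mem_sums_insert _ _ fresh4]
    simp only [h3, exists_shift]
    omega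
  have fresh5 : b2 + 1 ∉ insert e4 (insert e3 (insert e2 (insert (b1 + 1) G))) := by
    intro h
    rcases Finset.mem_insert.mp h with h | h
    · omega
    · rcases Finset.mem_insert.mp h with h | h
      · omega
      · rcases Finset.mem_insert.mp h with h | h
        · omega
        · rcases Finset.mem_insert.mp h with h | h
          · omega
          · have := (hGb _ h).2; omega
  refine ⟨insert (b2 + 1) (insert e4 (insert e3 (insert e2 (insert (b1 + 1) G)))), ?_, ?_⟩
  · intro x hx
    rcases Finset.mem_insert.mp hx with rfl | hx
    · omega
    rcases Finset.mem_insert.mp hx with rfl | hx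
    · omega
    rcases Finset.mem_insert.mp hx with rfl | hx
    · omega
    rcases Finset.mem_insert.mp hx with rfl | hx
    · omega
    rcases Finset.mem_insert.mp hx with rfl | hx
    · omega
    · exact (hGb _ hx).1
  · intro n
    rw [mem_sums_insert _ _ fresh5]
    simp only [h4, exists_shift]
    omega

lemma assemble (b1 b2 : ℕ) (hb : 4 ≤ b1) (hb2 : 3 * b1 + 5 ≤ b2)
    (F : Finset ℕ) (hpos : ∀ x ∈ F, 0 < x)
    (hF : ∀ n, n ∈ subsetSums ↑F ↔
      (n ≤ b1 + 2 * b2 + 1 ∧ n ≠ b1 ∧ n ≠ b2 ∧ n ≠ b1 + b2 + 1 ∧ n ≠ 2 * b2 + 1)) :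
    ∃ A B : Set ℕ, A.Infinite ∧ (∀ x ∈ A, 0 < x) ∧
      B.Infinite ∧ (∀ x ∈ B, 0 < x) ∧
      b1 ∈ B ∧ b2 ∈ B ∧ b2 + b1 + 1 ∈ B ∧
      (∀ x ∈ B, x = b1 ∨ x = b2 ∨ x = b2 + b1 + 1 ∨ b2 + b1 + 1 < x) ∧
      subsetSums A = Set.univ \ B := by
  set T : ℕ := b1 + 2 * b2 + 1 with hT
  set A : Set ℕ := ↑F ∪ {x | ∃ k : ℕ, x = (T + 2) * 2 ^ k} with hA
  have hFA : (↑F : Set ℕ) ⊆ A := Set.subset_union_left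
  have hpow : ∀ k : ℕ, T + 2 ≤ (T + 2) * 2 ^ k := by
    intro k
    have h1 : (1 : ℕ) ≤ 2 ^ k := Nat.one_le_pow _ _ (by norm_num)
    calc T + 2 = (T + 2) * 1 := by ring
    _ ≤ (T + 2) * 2 ^ k := Nat.mul_le_mul_left _ h1
  have hzero : (0 : ℕ) ∈ subsetSums A := ⟨∅, by simp⟩
  have hinj : ∀ i j : ℕ, (T + 2) * 2 ^ i = (T + 2) * 2 ^ j → i = j := by
    intro i j h
    have h2 : (2 : ℕ) ^ i = 2 ^ j := Nat.eq_of_mul_eq_mul_left (by omega) h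
    exact Nat.pow_right_injective (le_refl 2) h2
  have hlow : ∀ n, n ≤ T + 1 → (n ∈ subsetSums A ↔ n ∈ subsetSums (↑F : Set ℕ)) := by
    intro n hn
    constructor
    · rintro ⟨G, hG, rfl⟩
      refine ⟨G, ?_, rfl⟩
      intro x hx
      rcases hG hx with h | ⟨k, rfl⟩
      · exact h
      · exfalso
        have h1 : (T + 2) * 2 ^ k ≤ ∑ x ∈ G, x :=
          Finset.single_le_sum (fun i _ => Nat.zero_le i) (Finset.mem_coe.mp hx)
        have h2 := hpow k
        omega
    · rintro ⟨G, hG, rfl⟩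
      exact ⟨G, hG.trans hFA, rfl⟩
  have hmiss : ∀ k : ℕ, (T + 2) * 2 ^ (k + 1) - 1 ∉ subsetSums A := by
    rintro k ⟨G, hG, hsum⟩
    have hsplit := Finset.sum_inter_add_sum_sdiff G F (fun x => x)
    have h1 : ∑ x ∈ G ∩ F, x ≤ T := by
      have hm : (∑ x ∈ G ∩ F, x) ∈ subsetSums (↑F : Set ℕ) :=
        ⟨G ∩ F, by exact_mod_cast Finset.inter_subset_right, rfl⟩
      exact ((hF _).mp hm).1
    have hGF : ∀ x ∈ G \ F, ∃ j : ℕ, x = (T + 2) * 2 ^ j := by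
      intro x hx
      rcases hG (Finset.mem_coe.mpr (Finset.mem_sdiff.mp hx).1) with h | h
      · exact absurd (Finset.mem_coe.mp h) (Finset.mem_sdiff.mp hx).2
      · exact h
    by_cases hc : ∀ x ∈ G \ F, ∀ j : ℕ, x = (T + 2) * 2 ^ j → j ≤ k
    · have hsub : G \ F ⊆ (Finset.range (k + 1)).image (fun j => (T + 2) * 2 ^ j) := by
        intro x hx
        obtain ⟨j, rfl⟩ := hGF x hx
        exact Finset.mem_image.mpr ⟨j, Finset.mem_range.mpr (Nat.lt_succ_of_le (hc _ hx j rfl)), rfl⟩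
      have h2 : ∑ x ∈ G \ F, x ≤ ∑ x ∈ (Finset.range (k + 1)).image (fun j => (T + 2) * 2 ^ j), x :=
        Finset.sum_le_sum_of_subset hsub
      have h3 : ∑ x ∈ (Finset.range (k + 1)).image (fun j => (T + 2) * 2 ^ j), x
          = ∑ j ∈ Finset.range (k + 1), (T + 2) * 2 ^ j := by
        rw [Finset.sum_image]
        intro i _ j _ h
        exact hinj i j h
      have h4 : ∑ j ∈ Finset.range (k + 1), (T + 2) * 2 ^ j + (T + 2) = (T + 2) * 2 ^ (k + 1) := by
        rw [← Finset.mul_sum, sum_range_two_pow]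
        have h5 : (1 : ℕ) ≤ 2 ^ (k + 1) := Nat.one_le_pow _ _ (by norm_num)
        obtain ⟨q, hq⟩ := Nat.exists_eq_add_of_le h5
        rw [hq]
        simp [Nat.add_sub_cancel_left]
        ring
      have h6 := hpow (k + 1)
      omega
    · push_neg at hc
      obtain ⟨x, hx, j, hxe, hj⟩ := hc
      have h7 : (T + 2) * 2 ^ (k + 1) ≤ (T + 2) * 2 ^ j :=
        Nat.mul_le_mul_left _ (Nat.pow_le_pow_right (by norm_num) (by omega))
      have h8 : x ≤ ∑ x ∈ G, x :=
        Finset.single_le_sum (fun i _ => Nat.zero_le i) (Finset.mem_sdiff.mp hx).1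
      have h6 := hpow (k + 1)
      omega
  refine ⟨A, Set.univ \ subsetSums A, ?_, ?_, ?_, ?_, ?_, ?_, ?_, ?_, ?_⟩
  · apply Set.infinite_of_injective_forall_mem (f := fun k : ℕ => (T + 2) * 2 ^ k)
    · intro i j h; exact hinj i j h
    · intro k; exact Or.inr ⟨k, rfl⟩
  · intro x hx
    rcases hx with h | ⟨k, rfl⟩
    · exact hpos x (Finset.mem_coe.mp h)
    · have := hpow k; omega
  · apply Set.infinite_of_injective_forall_mem (f := fun k : ℕ => (T + 2) * 2 ^ (k + 1) - 1)
    · intro i j h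
      simp only at h
      have hi := hpow (i + 1)
      have hj := hpow (j + 1)
      have : (T + 2) * 2 ^ (i + 1) = (T + 2) * 2 ^ (j + 1) := by omega
      have := hinj _ _ this
      omega
    · intro k
      exact ⟨Set.mem_univ _, hmiss k⟩
  · intro x hx
    rcases Nat.eq_zero_or_pos x with rfl | h
    · exact absurd hzero hx.2
    · exact h
  · refine ⟨Set.mem_univ _, fun h => ?_⟩
    have := (hF b1).mp ((hlow b1 (by omega)).mp h)
    omega
  · refine ⟨Set.mem_univ _, fun h => ?_⟩
    have := (hF b2).mp ((hlow b2 (by omega)).mp h)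
    omega
  · refine ⟨Set.mem_univ _, fun h => ?_⟩
    have := (hF (b2 + b1 + 1)).mp ((hlow (b2 + b1 + 1) (by omega)).mp h)
    omega
  · intro x hx
    by_contra hcon
    push_neg at hcon
    obtain ⟨hx1, hx2, hx3, hx4⟩ := hcon
    have hxF : x ∈ subsetSums (↑F : Set ℕ) := (hF x).mpr (by omega)
    exact hx.2 ((hlow x (by omega)).mpr hxF)
  · exact (Set.diff_diff_cancel_left (Set.subset_univ _)).symm


end Stmt1Aux

open Stmt1Aux in
/-- For every admissible `b₁` and every `b₂` with `3b₁+5 ≤ b₂ ≤ 6b₁+10`, there are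
infinite sets `A`, `B` of positive integers whose three smallest elements are
`b₁ < b₂ < b₃ = b₂ + b₁ + 1`, with `P(A) = ℕ \ B`. -/
theorem stmt1 (b1 b2 : ℕ) (hb1 : b1 ∈ ({4, 7, 8} : Set ℕ) ∨ 11 ≤ b1)
    (hlow : 3 * b1 + 5 ≤ b2) (hhigh : b2 ≤ 6 * b1 + 10) :
    ∃ A B : Set ℕ, A.Infinite ∧ (∀ x ∈ A, 0 < x) ∧
      B.Infinite ∧ (∀ x ∈ B, 0 < x) ∧
      b1 ∈ B ∧ b2 ∈ B ∧ b2 + b1 + 1 ∈ B ∧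
      (∀ x ∈ B, x = b1 ∨ x = b2 ∨ x = b2 + b1 + 1 ∨ b2 + b1 + 1 < x) ∧
      subsetSums A = Set.univ \ B := by
  simp only [Set.mem_insert_iff, Set.mem_singleton_iff] at hb1
  have hb : 4 ≤ b1 := by omega
  obtain ⟨G, hGb, hG⟩ := cover_exists (b1 - 1) (by omega)
  have hGb' : ∀ x ∈ G, 0 < x ∧ 2 * x ≤ b1 + 1 := by
    intro x hx
    have := hGb x hx
    omega
  by_cases hA : b2 ≤ 4 * b1 + 3
  · obtain ⟨F, h1, h2⟩ := chain2 b1 b2 (b1 + 2) (b2 - 2 * b1 - 2) G hGb' hG hb hlow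
      (by omega) (by omega) (by omega) (by omega) (by omega) (by omega)
    exact assemble b1 b2 hb hlow F h1 h2
  · by_cases hBr : b2 ≤ 6 * b1 + 2
    · by_cases hE : b2 = 5 * b1 + 2
      · obtain ⟨F, h1, h2⟩ := chain2 b1 b2 (2 * b1) (2 * b1 + 2) G hGb' hG hb hlow
          (by omega) (by omega) (by omega) (by omega) (by omega) (by omega)
        exact assemble b1 b2 hb hlow F h1 h2
      · obtain ⟨F, h1, h2⟩ := chain2 b1 b2 (2 * b1 + 1) (b2 - 3 * b1 - 1) G hGb' hG hb hlow
          (by omega) (by omega) (by omega) (by omega) (by omega) (by omega)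
        exact assemble b1 b2 hb hlow F h1 h2
    · by_cases hE : b2 = 5 * b1 + 10
      · obtain ⟨F, h1, h2⟩ := chain3 b1 b2 (b1 + 2) (b1 + 4) (2 * b1 + 4) G hGb' hG hb hlow
          (by omega) (by omega) (by omega) (by omega) (by omega) (by omega)
          (by omega) (by omega) (by omega) (by omega) (by omega) (by omega) (by omega)
        exact assemble b1 b2 hb hlow F h1 h2
      · obtain ⟨F, h1, h2⟩ := chain3 b1 b2 (b1 + 2) (b1 + 3) (b2 - 3 * b1 - 5) G hGb' hG hb hlow
          (by omega) (by omega) (by omega) (by omega) (by omega) (by omega)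
          (by omega) (by omega) (by omega) (by omega) (by omega) (by omega) (by omega)
        exact assemble b1 b2 hb hlow F h1 h2
end

section
/- Let A = {a1 < a2 < ...} and B = {b1 < b2 < ...} be two infinite sequences of positive integers with b1 > 1 such that P(A) = ℕ \ B, and let k be the index with a_k < b1 < a_{k+1}. Then P({a1, ..., a_i}) = [0, c_i] for i = 1, 2, ..., k, where c_1 = 1, c_2 = 3, c_{i+1} = c_i + a_{i+1} for 1 ≤ i ≤ k−1, c_k = b1 − 1, and c_i + 1 ≥ a_{i+1} for 1 ≤ i ≤ k−1. -/
open Set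

theorem subsetSums_mono {S T : Set ℕ} (h : S ⊆ T) : subsetSums S ⊆ subsetSums T := by
  rintro n ⟨F, hF, hsum⟩
  exact ⟨F, hF.trans h, hsum⟩

theorem subsetSums_empty : subsetSums ∅ = {0} := by
  ext n
  simp only [subsetSums, subset_empty_iff, Finset.coe_eq_empty, mem_ofPred_eq, mem_singleton_iff]
  exact ⟨by rintro ⟨F, rfl, rfl⟩; rfl, fun hn => ⟨∅, rfl, hn ▸ rfl⟩⟩

theorem subsetSums_insert {S : Set ℕ} {x : ℕ} (hx : x ∉ S) :
    subsetSums (insert x S) = subsetSums S ∪ (x + ·) '' subsetSums S := by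
  ext n
  constructor
  · rintro ⟨F, hF, rfl⟩
    by_cases hxF : x ∈ F
    · refine Or.inr ⟨∑ y ∈ F.erase x, y, ⟨F.erase x, fun y hy => ?_, rfl⟩,
        F.add_sum_erase id hxF⟩
      obtain ⟨hyx, hyF⟩ := Finset.mem_erase.1 hy
      exact (hF hyF).resolve_left hyx
    · exact Or.inl ⟨F, fun y hy => (hF hy).resolve_left (by rintro rfl; exact hxF hy), rfl⟩
  · rintro (hn | ⟨m, ⟨F, hF, rfl⟩, rfl⟩)
    · exact subsetSums_mono (subset_insert x S) hn
    · refine ⟨insert x F, ?_, Finset.sum_insert fun h => hx (hF h)⟩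
      rw [Finset.coe_insert]
      exact insert_subset_insert hF

theorem subsetSums_insert_of_eq_Icc {S : Set ℕ} {x s : ℕ} (hS : subsetSums S = Icc 0 s)
    (hx : x ∉ S) (hxs : x ≤ s + 1) : subsetSums (insert x S) = Icc 0 (s + x) := by
  rw [subsetSums_insert hx, hS]
  ext n
  simp only [mem_union, mem_Icc, Set.mem_image]
  constructor
  · rintro (h | ⟨m, hm, rfl⟩) <;> omega
  · intro hn
    by_cases h : n ≤ s
    · exact Or.inl ⟨Nat.zero_le n, h⟩
    · exact Or.inr ⟨n - x, ⟨Nat.zero_le _, by omega⟩, by omega⟩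

theorem mem_subsetSums_inter_Iic {S : Set ℕ} {n : ℕ} (hn : n ∈ subsetSums S) :
    n ∈ subsetSums (S ∩ Iic n) := by
  obtain ⟨F, hF, rfl⟩ := hn
  exact ⟨F, fun y hy => ⟨hF hy, Finset.single_le_sum (f := id) (fun _ _ => Nat.zero_le _) hy⟩, rfl⟩

theorem image_Iio_add_one (a : ℕ → ℕ) (i : ℕ) :
    a '' Iio (i + 1) = insert (a i) (a '' Iio i) := by
  rw [← image_insert_eq]
  congr 1
  ext j
  simp only [mem_Iio, mem_insert_iff]
  omega

section

variable {a b : ℕ → ℕ}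

theorem mem_subsetSums_image_Iio (ha : StrictMono a) (hb : Monotone b)
    (hPA : subsetSums (range a) = univ \ range b) {n i : ℕ} (hnb : n < b 0) (hna : n < a i) :
    n ∈ subsetSums (a '' Iio i) := by
  have hn : n ∈ subsetSums (range a) := by
    rw [hPA]
    exact ⟨trivial, by rintro ⟨j, rfl⟩; exact absurd (hb (Nat.zero_le j)) (not_le.2 hnb)⟩
  refine subsetSums_mono ?_ (mem_subsetSums_inter_Iic hn)
  rintro _ ⟨⟨j, rfl⟩, hj⟩
  exact ⟨j, ha.lt_iff_lt.1 (lt_of_le_of_lt hj hna), rfl⟩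

theorem min_le_add_one_of_subsetSums_eq_Icc (ha : StrictMono a) (hb : Monotone b)
    (hPA : subsetSums (range a) = univ \ range b) {i s : ℕ}
    (hS : subsetSums (a '' Iio i) = Icc 0 s) : min (a i) (b 0) ≤ s + 1 := by
  by_contra! h
  have hmem := mem_subsetSums_image_Iio ha hb hPA (lt_of_lt_of_le h (min_le_right _ _))
    (lt_of_lt_of_le h (min_le_left _ _))
  rw [hS] at hmem
  exact absurd hmem.2 (by omega)

theorem lt_of_subsetSums_image_eq_Icc (hPA : subsetSums (range a) = univ \ range b) {I : Set ℕ}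
    {s : ℕ} (hS : subsetSums (a '' I) = Icc 0 s) : s < b 0 := by
  by_contra! h
  have hmem : b 0 ∈ subsetSums (range a) :=
    subsetSums_mono (image_subset_range a I) (hS ▸ ⟨Nat.zero_le _, h⟩)
  rw [hPA] at hmem
  exact hmem.2 ⟨0, rfl⟩

theorem subsetSums_image_Iio_eq_Icc (ha : StrictMono a) (hb : Monotone b)
    (hPA : subsetSums (range a) = univ \ range b) {k : ℕ} (hk : a k < b 0) :
    ∀ i ≤ k + 1, subsetSums (a '' Iio i) = Icc 0 (∑ j ∈ Finset.range i, a j) := by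
  intro i
  induction i with
  | zero => simp [subsetSums_empty]
  | succ i ih =>
    intro hi
    have hS := ih (by omega)
    have hai : a i < b 0 := (ha.monotone (by omega : i ≤ k)).trans_lt hk
    have hnext := min_le_add_one_of_subsetSums_eq_Icc ha hb hPA hS
    rw [image_Iio_add_one, Finset.sum_range_succ]
    refine subsetSums_insert_of_eq_Icc hS (fun h => ?_) (by omega)
    exact (Set.mem_Iio.1 (ha.injective.mem_set_image.1 h)).false

end

/-- Here `a i`, `b i` are the `(i+1)`-st elements of `A`, `B`, so the first `i`
elements of `A` are `a '' Set.Iio i`. -/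
theorem stmt2_general (a b : ℕ → ℕ) (ha : StrictMono a) (hapos : ∀ i, 0 < a i)
    (hb : StrictMono b)
    (hPA : subsetSums (Set.range a) = Set.univ \ Set.range b)
    (k : ℕ) (hk1 : a k < b 0) (hk2 : b 0 < a (k + 1)) :
    ∃ c : ℕ → ℕ, c 0 = 1 ∧ c 1 = 3 ∧
      (∀ i, i < k → c (i + 1) = c i + a (i + 1)) ∧
      c k = b 0 - 1 ∧
      (∀ i, i < k → a (i + 1) ≤ c i + 1) ∧
      (∀ i, i ≤ k → subsetSums (a '' Set.Iio (i + 1)) = Set.Icc 0 (c i)) := by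
  have hP := subsetSums_image_Iio_eq_Icc ha hb.monotone hPA hk1
  have hnext : ∀ i ≤ k, a i ≤ ∑ j ∈ Finset.range i, a j + 1 := fun i hi => by
    have := min_le_add_one_of_subsetSums_eq_Icc ha hb.monotone hPA (hP i (by omega))
    have := (ha.monotone hi).trans_lt hk1
    omega
  have ha0 : a 0 = 1 := by
    have h0 := hnext 0 k.zero_le
    rw [Finset.sum_range_zero] at h0
    have := hapos 0
    omega
  have hck : ∑ j ∈ Finset.range (k + 1), a j = b 0 - 1 := by
    have := lt_of_subsetSums_image_eq_Icc hPA (hP (k + 1) le_rfl)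
    have := min_le_add_one_of_subsetSums_eq_Icc ha hb.monotone hPA (hP (k + 1) le_rfl)
    omega
  -- beyond `k` the only constraint is `c 1 = 3`, relevant when `k = 0`
  refine ⟨fun i => if i ≤ k then ∑ j ∈ Finset.range (i + 1), a j else 3, by simp [ha0], ?_,
    fun i hi => ?_, by simpa using hck, fun i hi => ?_, fun i hi => ?_⟩
  · by_cases hk : 1 ≤ k
    · have h1 := hnext 1 hk
      rw [Finset.sum_range_one] at h1
      have := ha zero_lt_one
      simp only [if_pos hk]
      rw [Finset.sum_range_succ, Finset.sum_range_one]
      omega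
    · simp [hk]
  · simp only [if_pos (Nat.succ_le_of_lt hi), if_pos hi.le]
    exact Finset.sum_range_succ _ _
  · simpa only [if_pos hi.le] using hnext (i + 1) hi
  · simpa only [if_pos hi] using hP (i + 1) (by omega)

/-- Structure of the subset sums of the initial segments of `A` below `b₁`.
Here `a i`, `b i` are the `(i+1)`-st elements of `A`, `B`, so the first `i`
elements of `A` are `a '' Set.Iio i`. -/
theorem stmt2 (a b : ℕ → ℕ) (ha : StrictMono a) (hapos : ∀ i, 0 < a i)
    (hb : StrictMono b) (hb1 : 1 < b 0)
    (hPA : subsetSums (Set.range a) = Set.univ \ Set.range b)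
    (k : ℕ) (hk1 : a k < b 0) (hk2 : b 0 < a (k + 1)) :
    ∃ c : ℕ → ℕ, c 0 = 1 ∧ c 1 = 3 ∧
      (∀ i, i < k → c (i + 1) = c i + a (i + 1)) ∧
      c k = b 0 - 1 ∧
      (∀ i, i < k → a (i + 1) ≤ c i + 1) ∧
      (∀ i, i ≤ k → subsetSums (a '' Set.Iio (i + 1)) = Set.Icc 0 (c i)) :=
  stmt2_general a b ha hapos hb hPA k hk1 hk2
end

section
/- Let A = {a1 < a2 < ...} and B = {b1 < b2 < ...} be two infinite sequences of positive integers with b1 > 1 such that P(A) = ℕ \ B, let k be the index with a_k < b1 < a_{k+1}, so that P({a1, ..., a_k}) = [0, b1 − 1]. If b2 ≥ 3·b1 + 5, then a_{k+1} = b1 + 1, a_{k+2} ≤ 2·b1 + 1, a_{k+3} ≤ a_{k+2} + b1, and b2 ≥ a_{k+3} + a_{k+2} + b1. -/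
/-!
Splitting `A` at index `k` writes `P(A)` as `[0, b₁ - 1] + T`, where `T` is the set of subset sums
of the terms `a_i` with `i > k`. So `P(A)` is the union of the windows `[t, t + b₁ - 1]`, `t ∈ T`,
and below `b₂` it misses only `b₁`. A nonzero element of `T` is at least `a_{k+1}`, one other than
`a_{k+1}` is at least `a_{k+2}`, and one outside `{0, a_{k+1}, a_{k+2}, a_{k+1} + a_{k+2}}` is at
least `a_{k+3}`. Placing `b₁ + 1`, `2b₁ + 1` and `a_{k+2} + b₁`, all below `b₂`, in windows gives
the first three claims in turn. Given these, the windows of the sums of at most two of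
`a_{k+1}, a_{k+2}, a_{k+3}` chain together and cover `[b₁ + 1, a_{k+2} + a_{k+3} + b₁ - 1]`,
which therefore cannot contain `b₂`.
-/

open Set Pointwise

theorem subsetSums_union {X Y : Set ℕ} (h : Disjoint X Y) :
    subsetSums (X ∪ Y) = subsetSums X + subsetSums Y := by
  classical
  ext n
  constructor
  · rintro ⟨F, hF, rfl⟩
    refine ⟨_, ⟨F.filter (· ∈ X), fun x hx => ?_, rfl⟩, _, ⟨F.filter (· ∉ X), fun x hx => ?_, rfl⟩,
      Finset.sum_filter_add_sum_filter_not _ _ _⟩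
    · exact (Finset.mem_filter.1 hx).2
    · obtain ⟨hxF, hxX⟩ := Finset.mem_filter.1 hx
      exact (hF hxF).resolve_left hxX
  · rintro ⟨_, ⟨F, hF, rfl⟩, _, ⟨G, hG, rfl⟩, rfl⟩
    refine ⟨F ∪ G, ?_, Finset.sum_union (Finset.disjoint_coe.1 (h.mono hF hG))⟩
    rw [Finset.coe_union]
    exact union_subset_union hF hG

theorem subsetSums_singleton (x : ℕ) : subsetSums {x} = {0, x} := by
  ext n
  constructor
  · rintro ⟨F, hF, rfl⟩
    have hF' : F ⊆ {x} := Finset.coe_subset.1 (by simpa using hF)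
    rcases Finset.subset_singleton_iff.1 hF' with rfl | rfl <;> simp
  · rintro (rfl | h)
    · exact ⟨∅, by simp, by simp⟩
    · exact ⟨{x}, by simp, by simp [mem_singleton_iff.1 h]⟩

theorem subsetSums_pair {x y : ℕ} (hxy : x ≠ y) :
    subsetSums {x, y} = {0, x} + {0, y} := by
  rw [← singleton_union, subsetSums_union (disjoint_singleton.2 hxy), subsetSums_singleton,
    subsetSums_singleton]

theorem exists_le_of_mem_subsetSums {S : Set ℕ} {t : ℕ} (ht : t ∈ subsetSums S) (h0 : t ≠ 0) :
    ∃ x ∈ S, x ≤ t := by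
  obtain ⟨F, hF, rfl⟩ := ht
  obtain ⟨x, hx⟩ := Finset.nonempty_of_sum_ne_zero h0
  exact ⟨x, hF hx, Finset.single_le_sum (f := id) (fun _ _ => Nat.zero_le _) hx⟩

theorem sum_mem_subsetSums_image {a : ℕ → ℕ} {S : Set ℕ} (ha : InjOn a S) {F : Finset ℕ}
    (hF : ↑F ⊆ S) : ∑ i ∈ F, a i ∈ subsetSums (a '' S) := by
  refine ⟨F.image a, ?_, Finset.sum_image fun _ hi _ hj => ha (hF hi) (hF hj)⟩
  rw [Finset.coe_image]
  exact image_mono hF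

theorem subsetSums_range_eq_add {a : ℕ → ℕ} (ha : Function.Injective a) (j : ℕ) :
    subsetSums (range a) = subsetSums (a '' Iio j) + subsetSums (a '' Ici j) := by
  rw [← subsetSums_union, ← image_union, Iio_union_Ici, image_univ]
  exact (disjoint_image_iff ha).2 (Iio_disjoint_Ici le_rfl)

theorem apply_le_of_mem_subsetSums_image_Ici {a : ℕ → ℕ} (ha : Monotone a) {m t : ℕ}
    (ht : t ∈ subsetSums (a '' Ici m)) (h0 : t ≠ 0) : a m ≤ t := by
  obtain ⟨_, ⟨i, hi, rfl⟩, hit⟩ := exists_le_of_mem_subsetSums ht h0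
  exact (ha hi).trans hit

theorem mem_subsetSums_image_Ico_or_le {a : ℕ → ℕ} (ha : StrictMono a) {j m t : ℕ}
    (hjm : j ≤ m) (ht : t ∈ subsetSums (a '' Ici j)) :
    t ∈ subsetSums (a '' Ico j m) ∨ a m ≤ t := by
  have hdisj : Disjoint (a '' Ico j m) (a '' Ici m) :=
    (disjoint_image_iff ha.injective).2 ((Iio_disjoint_Ici le_rfl).mono_left Ico_subset_Iio_self)
  rw [← Ico_union_Ici_eq_Ici hjm, image_union, subsetSums_union hdisj] at ht
  obtain ⟨u, hu, v, hv, rfl⟩ := mem_add.1 ht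
  rcases eq_or_ne v 0 with rfl | hv0
  · exact Or.inl (by simpa using hu)
  · exact Or.inr ((apply_le_of_mem_subsetSums_image_Ici ha.monotone hv hv0).trans le_add_self)

/-! Below, `s`, `c` and `j` stand for `b₁`, `b₂` and `k + 1`. -/

theorem apply_eq_add_one_of_mem {a : ℕ → ℕ} (ha : Monotone a) {j s : ℕ} (hs : s < a j)
    (h : s + 1 ∈ Iio s + subsetSums (a '' Ici j)) : a j = s + 1 := by
  obtain ⟨u, hu, t, ht, hut⟩ := mem_add.1 h
  have := apply_le_of_mem_subsetSums_image_Ici ha ht (by grind)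
  grind

theorem apply_add_one_le_of_mem {a : ℕ → ℕ} (ha : StrictMono a) {j s : ℕ} (h1 : a j = s + 1)
    (h : 2 * s + 1 ∈ Iio s + subsetSums (a '' Ici j)) : a (j + 1) ≤ 2 * s + 1 := by
  obtain ⟨u, hu, t, ht, hut⟩ := mem_add.1 h
  rcases mem_subsetSums_image_Ico_or_le ha (Nat.le_succ j) ht with ht | ht
  · rw [show Ico j (j + 1) = {j} by grind, image_singleton, subsetSums_singleton] at ht
    grind
  · grind

theorem apply_add_two_le_of_mem {a : ℕ → ℕ} (ha : StrictMono a) {j s : ℕ} (h1 : a j = s + 1)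
    (h : a (j + 1) + s ∈ Iio s + subsetSums (a '' Ici j)) : a (j + 2) ≤ a (j + 1) + s := by
  obtain ⟨u, hu, t, ht, hut⟩ := mem_add.1 h
  rcases mem_subsetSums_image_Ico_or_le ha (by omega : j ≤ j + 2) ht with ht | ht
  · rw [show Ico j (j + 2) = {j, j + 1} by grind, image_pair,
      subsetSums_pair (ha.injective.ne (by omega))] at ht
    obtain ⟨v, hv, w, hw, rfl⟩ := mem_add.1 ht
    have := ha (by omega : j < j + 1)
    grind
  · grind

theorem apply_add_two_add_le_of_notMem {a : ℕ → ℕ} (ha : StrictMono a) {j s c : ℕ}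
    (h1 : a j = s + 1) (h2 : a (j + 1) ≤ 2 * s + 1) (h3 : a (j + 2) ≤ a (j + 1) + s)
    (hsc : s < c) (hc : c ∉ Iio s + subsetSums (a '' Ici j)) :
    a (j + 2) + a (j + 1) + s ≤ c := by
  have hwin : ∀ F : Finset ℕ, ↑F ⊆ Ici j → ¬ (∑ i ∈ F, a i ≤ c ∧ c < ∑ i ∈ F, a i + s) :=
    fun F hF h => hc (mem_add.2 ⟨c - ∑ i ∈ F, a i, by grind,
      _, sum_mem_subsetSums_image ha.injective.injOn hF, by omega⟩)
  have h12 := ha (by omega : j < j + 1)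
  have h23 := ha (by omega : j + 1 < j + 2)
  have w1 := hwin {j} (by simp)
  have w2 := hwin {j + 1} (by simp)
  have w3 := hwin {j + 2} (by simp)
  have w12 := hwin {j, j + 1} (by simp [insert_subset_iff])
  have w13 := hwin {j, j + 2} (by simp [insert_subset_iff])
  have w23 := hwin {j + 1, j + 2} (by simp [insert_subset_iff])
  simp only [Finset.sum_singleton, Finset.sum_pair (by omega : j ≠ j + 1),
    Finset.sum_pair (by omega : j ≠ j + 2), Finset.sum_pair (by omega : j + 1 ≠ j + 2)]
    at w1 w2 w3 w12 w13 w23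
  omega

/-- `a i`, `b i` are the `(i+1)`-st elements of `A`, `B`. -/
theorem stmt3_general (a b : ℕ → ℕ) (ha : StrictMono a)
    (hb : StrictMono b) (hb1 : 1 < b 0)
    (hPA : subsetSums (Set.range a) = Set.univ \ Set.range b)
    (k : ℕ) (hk2 : b 0 < a (k + 1))
    (hPk : subsetSums (a '' Set.Iio (k + 1)) = Set.Icc 0 (b 0 - 1))
    (hb2 : 3 * b 0 + 5 ≤ b 1) :
    a (k + 1) = b 0 + 1 ∧ a (k + 2) ≤ 2 * b 0 + 1 ∧
      a (k + 3) ≤ a (k + 2) + b 0 ∧ a (k + 3) + a (k + 2) + b 0 ≤ b 1 := by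
  have hP : Set.univ \ Set.range b = Iio (b 0) + subsetSums (a '' Ici (k + 1)) := by
    rw [← hPA, subsetSums_range_eq_add ha.injective (k + 1), hPk,
      show Icc 0 (b 0 - 1) = Iio (b 0) by grind]
  have hlow : ∀ n < b 1, n ≠ b 0 → n ∈ Iio (b 0) + subsetSums (a '' Ici (k + 1)) := by
    rintro n hn1 hn0
    refine hP ▸ ⟨trivial, ?_⟩
    rintro ⟨i, rfl⟩
    exact hn0 (congrArg b (Nat.lt_one_iff.1 (hb.lt_iff_lt.1 hn1)))
  have hc : b 1 ∉ Iio (b 0) + subsetSums (a '' Ici (k + 1)) :=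
    hP ▸ fun h => h.2 ⟨1, rfl⟩
  have h1 := apply_eq_add_one_of_mem ha.monotone hk2 (hlow _ (by omega) (by omega))
  have h2 : a (k + 2) ≤ 2 * b 0 + 1 :=
    apply_add_one_le_of_mem ha h1 (hlow _ (by omega) (by omega))
  have h12 : a (k + 1) < a (k + 2) := ha (by omega)
  have h3 : a (k + 3) ≤ a (k + 2) + b 0 :=
    apply_add_two_le_of_mem ha h1 (hlow (a (k + 2) + b 0) (by omega) (by omega))
  exact ⟨h1, h2, h3, apply_add_two_add_le_of_notMem ha h1 h2 h3 (hb Nat.zero_lt_one) hc⟩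

/-- If `b₂ ≥ 3b₁+5` then `a_{k+1} = b₁+1`, `a_{k+2} ≤ 2b₁+1`,
`a_{k+3} ≤ a_{k+2}+b₁` and `b₂ ≥ a_{k+3}+a_{k+2}+b₁`.
Here `a i`, `b i` are the `(i+1)`-st elements of `A`, `B`. -/
theorem stmt3 (a b : ℕ → ℕ) (ha : StrictMono a) (hapos : ∀ i, 0 < a i)
    (hb : StrictMono b) (hb1 : 1 < b 0)
    (hPA : subsetSums (Set.range a) = Set.univ \ Set.range b)
    (k : ℕ) (hk1 : a k < b 0) (hk2 : b 0 < a (k + 1))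
    (hPk : subsetSums (a '' Set.Iio (k + 1)) = Set.Icc 0 (b 0 - 1))
    (hb2 : 3 * b 0 + 5 ≤ b 1) :
    a (k + 1) = b 0 + 1 ∧ a (k + 2) ≤ 2 * b 0 + 1 ∧
      a (k + 3) ≤ a (k + 2) + b 0 ∧ a (k + 3) + a (k + 2) + b 0 ≤ b 1 :=
  stmt3_general a b ha hb hb1 hPA k hk2 hPk hb2
end

section
/- Let A = {a1 < a2 < ...} and B = {b1 < b2 < ...} be two infinite sequences of positive integers with b1 > 1 such that P(A) = ℕ \ B, and let k be the index with a_k < b1 < a_{k+1}. If b2 ≥ 3·b1 + 5, then P({a1, ..., a_{k+1}}) = [0, 2·b1] \ {b1}. -/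
/-!
The elements of `A` below `b₁` are `a₁, …, a_k`, and every `n < b₁` is a subset sum of them.
A finite set whose subset sums contain every number below a bound exceeding all its elements is
complete: each element is at most one more than the sum of the smaller ones (otherwise that sum
plus one would be a missing subset sum), so its subset sums form the whole interval up to its total.
As `b₁` is not a subset sum, the total of `a₁, …, a_k` is `b₁ - 1`. Next, `b₁ + 1 < b₂` is
a subset sum, which forces `a_{k+1} = b₁ + 1`, and adding `a_{k+1}` to `[0, b₁ - 1]` gives
`[0, 2b₁] \ {b₁}`.
-/

theorem Nat.Iic_union_image_const_add_Iic {x S : ℕ} (h : x ≤ S + 1) :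
    Set.Iic S ∪ (x + ·) '' Set.Iic S = Set.Iic (x + S) := by
  ext n
  simp only [Set.mem_union, Set.mem_Iic, Set.mem_image]
  constructor
  · rintro (hn | ⟨m, hm, rfl⟩) <;> omega
  · intro hn
    by_cases hnS : n ≤ S
    · exact Or.inl hnS
    · exact Or.inr ⟨n - x, by omega, by omega⟩

namespace subsetSums

theorem mono {S T : Set ℕ} (h : S ⊆ T) : subsetSums S ⊆ subsetSums T :=
  fun _ ⟨F, hF, hsum⟩ => ⟨F, hF.trans h, hsum⟩

theorem empty : subsetSums ∅ = {0} := by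
  ext n
  constructor
  · rintro ⟨F, hF, rfl⟩
    rw [Finset.coe_eq_empty.mp (Set.subset_empty_iff.mp hF), Finset.sum_empty]
    rfl
  · rintro rfl
    exact ⟨∅, by simp, rfl⟩

theorem insert_of_notMem {S : Set ℕ} {x : ℕ} (hx : x ∉ S) :
    subsetSums (insert x S) = subsetSums S ∪ (x + ·) '' subsetSums S := by
  ext n
  constructor
  · rintro ⟨F, hF, rfl⟩
    by_cases hxF : x ∈ F
    · refine Or.inr ⟨∑ y ∈ F.erase x, y, ⟨F.erase x, fun y hy => ?_, rfl⟩,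
        Finset.add_sum_erase F id hxF⟩
      obtain ⟨hyx, hyF⟩ := Finset.mem_erase.mp hy
      exact (Set.mem_insert_iff.mp (hF hyF)).resolve_left hyx
    · refine Or.inl ⟨F, fun y hy => (Set.mem_insert_iff.mp (hF hy)).resolve_left ?_, rfl⟩
      rintro rfl
      exact hxF hy
  · rintro (hn | ⟨m, ⟨F, hF, rfl⟩, rfl⟩)
    · exact mono (Set.subset_insert x S) hn
    · have hxF : x ∉ F := fun h => hx (hF h)
      refine ⟨insert x F, ?_, Finset.sum_insert hxF⟩
      rw [Finset.coe_insert]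
      exact Set.insert_subset_insert hF

theorem mem_inter_Iic {S : Set ℕ} {n : ℕ} (hn : n ∈ subsetSums S) :
    n ∈ subsetSums (S ∩ Set.Iic n) := by
  obtain ⟨F, hF, rfl⟩ := hn
  refine ⟨F, fun x hx => ⟨hF hx, ?_⟩, rfl⟩
  exact Finset.single_le_sum (f := id) (fun _ _ => Nat.zero_le _) hx

theorem mem_image_Iio_of_lt {a : ℕ → ℕ} (ha : Monotone a) {n m : ℕ}
    (hn : n ∈ subsetSums (Set.range a)) (hm : n < a m) : n ∈ subsetSums (a '' Set.Iio m) := by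
  refine mono ?_ (mem_inter_Iic hn)
  rintro _ ⟨⟨j, rfl⟩, hj⟩
  exact ⟨j, ha.reflect_lt (lt_of_le_of_lt hj hm), rfl⟩

theorem eq_Iic_sum_of_Iio_subset {s : Finset ℕ} {c : ℕ} (hs : ∀ x ∈ s, x < c)
    (hc : Set.Iio c ⊆ subsetSums ↑s) : subsetSums ↑s = Set.Iic (∑ x ∈ s, x) := by
  induction s using Finset.induction_on_max generalizing c with
  | empty =>
    ext n
    simp [empty]
  | insert x s hlt ih =>
    have hxs : x ∉ s := fun h => (hlt x h).false
    have hbelow : Set.Iio x ⊆ subsetSums ↑s := by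
      intro n hn
      refine mono ?_ (mem_inter_Iic (hc ((Set.mem_Iio.mp hn).trans (hs x (s.mem_insert_self x)))))
      rintro y ⟨hy, hyn⟩
      refine (Set.mem_insert_iff.mp (Finset.coe_insert x s ▸ hy)).resolve_left ?_
      rintro rfl
      exact (Set.mem_Iio.mp hn).not_ge hyn
    have hsums : subsetSums ↑s = Set.Iic (∑ y ∈ s, y) := ih hlt hbelow
    have hx : x ≤ ∑ y ∈ s, y + 1 := by
      by_contra! h
      have := hsums ▸ hbelow h
      exact (Nat.lt_succ_self _).not_ge this
    rw [Finset.coe_insert, insert_of_notMem (Finset.mem_coe.not.mpr hxs), hsums,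
      Finset.sum_insert hxs, Nat.Iic_union_image_const_add_Iic hx]

theorem image_Iio_succ {a : ℕ → ℕ} (ha : Function.Injective a) (m : ℕ) :
    subsetSums (a '' Set.Iio (m + 1)) =
      subsetSums (a '' Set.Iio m) ∪ (a m + ·) '' subsetSums (a '' Set.Iio m) := by
  have hnotMem : a m ∉ a '' Set.Iio m := fun ⟨j, hj, hja⟩ => (Set.mem_Iio.mp hj).ne (ha hja)
  rw [← insert_of_notMem hnotMem, ← Set.image_insert_eq, Set.Iio_insert, Set.Iio_add_one_eq_Iic]

end subsetSums

theorem notMem_range_of_lt_apply_zero {b : ℕ → ℕ} (hb : Monotone b) {n : ℕ} (hn : n < b 0) :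
    n ∉ Set.range b := by
  rintro ⟨i, rfl⟩
  exact (hb i.zero_le).not_gt hn

theorem notMem_range_of_apply_zero_lt_of_lt_apply_one {b : ℕ → ℕ} (hb : Monotone b) {n : ℕ}
    (h0 : b 0 < n) (h1 : n < b 1) : n ∉ Set.range b := by
  rintro ⟨_ | i, rfl⟩
  · exact h0.false
  · exact (hb (show 1 ≤ i + 1 by omega)).not_gt h1

open subsetSums

theorem subsetSums_image_Iio_eq_Iio {a b : ℕ → ℕ} (ha : StrictMono a) (hb : Monotone b)
    (hPA : subsetSums (Set.range a) = Set.univ \ Set.range b)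
    {k : ℕ} (hk1 : a k < b 0) (hk2 : b 0 < a (k + 1)) :
    subsetSums (a '' Set.Iio (k + 1)) = Set.Iio (b 0) := by
  set T := (Finset.range (k + 1)).image a
  have hT : (↑T : Set ℕ) = a '' Set.Iio (k + 1) := by simp [T]
  have hbelow : Set.Iio (b 0) ⊆ subsetSums ↑T := fun n hn => by
    have hnb := notMem_range_of_lt_apply_zero hb hn
    exact hT ▸ mem_image_Iio_of_lt ha.monotone (hPA ▸ ⟨trivial, hnb⟩) (hn.trans hk2)
  have hTsums : subsetSums ↑T = Set.Iic (∑ x ∈ T, x) := by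
    refine eq_Iic_sum_of_Iio_subset ?_ hbelow
    simp only [T, Finset.mem_image, Finset.mem_range]
    rintro _ ⟨j, hj, rfl⟩
    exact (ha.monotone (Nat.lt_succ_iff.mp hj)).trans_lt hk1
  have hlt : ∑ x ∈ T, x < b 0 := by
    by_contra! h
    have hmem : b 0 ∈ subsetSums (Set.range a) :=
      mono (hT ▸ Set.image_subset_range a _) (hTsums ▸ h)
    exact (hPA ▸ hmem).2 ⟨0, rfl⟩
  have hge : b 0 ≤ ∑ x ∈ T, x + 1 := by
    by_contra! h
    exact (Nat.lt_succ_self _).not_ge (hTsums ▸ hbelow h)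
  rw [← hT, hTsums, ← Set.Iio_add_one_eq_Iic, show ∑ x ∈ T, x + 1 = b 0 by omega]

theorem apply_succ_eq_of_subsetSums_range_eq {a b : ℕ → ℕ} (ha : StrictMono a)
    (hb : Monotone b)
    (hPA : subsetSums (Set.range a) = Set.univ \ Set.range b)
    {k : ℕ} (hk1 : a k < b 0) (hk2 : b 0 < a (k + 1)) (hb01 : b 0 + 1 < b 1) :
    a (k + 1) = b 0 + 1 := by
  have hnb := notMem_range_of_apply_zero_lt_of_lt_apply_one hb (Nat.lt_succ_self _) hb01
  have hmem : b 0 + 1 ∈ subsetSums (Set.range a) := hPA ▸ ⟨trivial, hnb⟩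
  have hlt : b 0 + 1 < a (k + 1 + 1) := (Nat.succ_le_of_lt hk2).trans_lt (ha (Nat.lt_succ_self _))
  have := mem_image_Iio_of_lt ha.monotone hmem hlt
  rw [image_Iio_succ ha.injective, subsetSums_image_Iio_eq_Iio ha hb hPA hk1 hk2] at this
  rcases this with h | ⟨m, -, h⟩
  · exact absurd (Set.mem_Iio.mp h) (Nat.lt_succ_self _).not_gt
  · dsimp only at h
    omega

theorem Nat.Iio_union_image_const_add_Iio (c : ℕ) :
    Set.Iio c ∪ (c + 1 + ·) '' Set.Iio c = Set.Icc 0 (2 * c) \ {c} := by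
  ext n
  simp only [Set.mem_union, Set.mem_Iio, Set.mem_image, Set.mem_sdiff, Set.mem_Icc,
    Set.mem_singleton_iff]
  constructor
  · rintro (hn | ⟨m, hm, rfl⟩) <;> omega
  · rintro ⟨⟨-, hn⟩, hnc⟩
    by_cases hlt : n < c
    · exact Or.inl hlt
    · exact Or.inr ⟨n - (c + 1), by omega, by omega⟩

/-- `a i`, `b i` are the `(i+1)`-st elements of `A`, `B`. -/
theorem stmt5_general (a b : ℕ → ℕ) (ha : StrictMono a)
    (hb : StrictMono b)
    (hPA : subsetSums (Set.range a) = Set.univ \ Set.range b)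
    (k : ℕ) (hk1 : a k < b 0) (hk2 : b 0 < a (k + 1))
    (hb2 : 3 * b 0 + 5 ≤ b 1) :
    subsetSums (a '' Set.Iio (k + 2)) = Set.Icc 0 (2 * b 0) \ {b 0} := by
  rw [image_Iio_succ ha.injective, subsetSums_image_Iio_eq_Iio ha hb.monotone hPA hk1 hk2,
    apply_succ_eq_of_subsetSums_range_eq ha hb.monotone hPA hk1 hk2 (by omega),
    Nat.Iio_union_image_const_add_Iio]

/-- If `b₂ ≥ 3b₁+5` then `P({a₁,…,a_{k+1}}) = [0, 2b₁] \ {b₁}`.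
Here `a i`, `b i` are the `(i+1)`-st elements of `A`, `B`. -/
theorem stmt5 (a b : ℕ → ℕ) (ha : StrictMono a) (hapos : ∀ i, 0 < a i)
    (hb : StrictMono b) (hb1 : 1 < b 0)
    (hPA : subsetSums (Set.range a) = Set.univ \ Set.range b)
    (k : ℕ) (hk1 : a k < b 0) (hk2 : b 0 < a (k + 1))
    (hb2 : 3 * b 0 + 5 ≤ b 1) :
    subsetSums (a '' Set.Iio (k + 2)) = Set.Icc 0 (2 * b 0) \ {b 0} :=
  stmt5_general a b ha hb hPA k hk1 hk2 hb2
end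

section
/- Let A = {a1 < a2 < ...} and B = {b1 < b2 < ...} be two infinite sequences of positive integers with b1 > 1 such that P(A) = ℕ \ B, and let k be the index with a_k < b1 < a_{k+1}. If b2 ≥ 3·b1 + 5 and a_{k+2} + a_{k+3} + b1 < b2, then a_{k+4} ≤ a_{k+2} + a_{k+3} + b1. -/
/-- If `b₂ ≥ 3b₁+5` and `a_{k+2}+a_{k+3}+b₁ < b₂` then
`a_{k+4} ≤ a_{k+2}+a_{k+3}+b₁`.
Here `a i`, `b i` are the `(i+1)`-st elements of `A`, `B`. -/
theorem stmt8 (a b : ℕ → ℕ) (ha : StrictMono a) (hapos : ∀ i, 0 < a i)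
    (hb : StrictMono b) (hb1 : 1 < b 0)
    (hPA : subsetSums (Set.range a) = Set.univ \ Set.range b)
    (k : ℕ) (hk1 : a k < b 0) (hk2 : b 0 < a (k + 1))
    (hb2 : 3 * b 0 + 5 ≤ b 1)
    (hlt : a (k + 2) + a (k + 3) + b 0 < b 1) :
    a (k + 4) ≤ a (k + 2) + a (k + 3) + b 0 := by
  by_contra hcon
  push_neg at hcon
  set β := b 0 with hβ
  have hβ2 : 2 ≤ β := hb1
  have hainj : Function.Injective a := ha.injective
  have hmemP : ∀ n : ℕ, n ∉ Set.range b →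
      ∃ F : Finset ℕ, ↑F ⊆ Set.range a ∧ ∑ x ∈ F, x = n := by
    intro n hn
    have : n ∈ subsetSums (Set.range a) := by
      rw [hPA]; exact ⟨trivial, hn⟩
    exact this
  have hnotb_lt : ∀ n : ℕ, n < β → n ∉ Set.range b := by
    rintro n hn ⟨i, rfl⟩
    have := hb.monotone (Nat.zero_le i)
    omega
  have hnotb_mid : ∀ n : ℕ, β < n → n < b 1 → n ∉ Set.range b := by
    rintro n h1 h2 ⟨i, rfl⟩
    rcases Nat.eq_zero_or_pos i with rfl | hi
    · omega
    · have : b 1 ≤ b i := hb.monotone hi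
      omega
  have hβnotP : β ∉ subsetSums (Set.range a) := by
    rw [hPA]; exact fun h => h.2 ⟨0, rfl⟩
  have helem : ∀ (F : Finset ℕ) (x : ℕ), x ∈ F → x ≤ ∑ y ∈ F, y :=
    fun F x hx => Finset.single_le_sum (fun i _ => Nat.zero_le i) hx
  have hcap : ∀ (F : Finset ℕ) (m : ℕ), ↑F ⊆ Set.range a →
      (∀ x ∈ F, x < a m) → F ⊆ Finset.image a (Finset.range m) := by
    intro F m hFa hFm x hx
    obtain ⟨j, rfl⟩ := hFa hx
    exact Finset.mem_image.2 ⟨j, Finset.mem_range.2 (ha.lt_iff_lt.1 (hFm _ hx)), rfl⟩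
  have hsum_image : ∀ m, ∑ x ∈ Finset.image a (Finset.range m), x
      = ∑ i ∈ Finset.range m, a i := by
    intro m
    rw [Finset.sum_image (fun x _ y _ h => hainj h)]
  -- coverage below β by subsets of {a 0, ..., a k}
  have hcover : ∀ n, n < β →
      ∃ F, F ⊆ Finset.image a (Finset.range (k+1)) ∧ ∑ x ∈ F, x = n := by
    intro n hn
    obtain ⟨F, hFa, hFs⟩ := hmemP n (hnotb_lt n hn)
    refine ⟨F, hcap F (k+1) hFa ?_, hFs⟩
    intro x hx
    have := helem F x hx
    rw [hFs] at this
    omega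
  -- key growth condition
  have hkey : ∀ j ≤ k, a j ≤ (∑ i ∈ Finset.range j, a i) + 1 := by
    intro j hj
    by_contra hja
    push_neg at hja
    have hajk : a j ≤ a k := ha.monotone hj
    obtain ⟨F, hF1, hF2⟩ := hmemP ((∑ i ∈ Finset.range j, a i) + 1)
      (hnotb_lt _ (by omega))
    have hsub : F ⊆ Finset.image a (Finset.range j) := by
      apply hcap F j hF1
      intro x hx
      have := helem F x hx
      rw [hF2] at this
      omega
    have : ∑ x ∈ F, x ≤ ∑ x ∈ Finset.image a (Finset.range j), x :=
      Finset.sum_le_sum_of_subset hsub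
    rw [hF2, hsum_image] at this
    omega
  -- completeness: every n up to the partial sum is a subset sum
  have hcomplete : ∀ j, j ≤ k + 1 → ∀ n, n ≤ ∑ i ∈ Finset.range j, a i →
      ∃ F, F ⊆ Finset.image a (Finset.range j) ∧ ∑ x ∈ F, x = n := by
    intro j
    induction j with
    | zero =>
      intro _ n hn
      simp only [Finset.range_zero, Finset.sum_empty, Nat.le_zero] at hn
      subst hn
      exact ⟨∅, by simp, by simp⟩
    | succ j ih =>
      intro hj n hn
      rw [Finset.sum_range_succ] at hn
      rcases le_or_gt n (∑ i ∈ Finset.range j, a i) with h | h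
      · obtain ⟨F, hF1, hF2⟩ := ih (by omega) n h
        exact ⟨F, hF1.trans (Finset.image_subset_image
          (Finset.range_subset_range.2 (by omega))), hF2⟩
      · have hjk : j ≤ k := by omega
        have haj := hkey j hjk
        obtain ⟨F, hF1, hF2⟩ := ih (by omega) (n - a j) (by omega)
        have hajF : a j ∉ F := by
          intro hmem
          obtain ⟨i, hi, hia⟩ := Finset.mem_image.1 (hF1 hmem)
          have := hainj hia
          have := Finset.mem_range.1 hi
          omega
        refine ⟨insert (a j) F, ?_, ?_⟩
        · intro x hx
          rcases Finset.mem_insert.1 hx with rfl | hx'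
          · exact Finset.mem_image.2 ⟨j, Finset.mem_range.2 (Nat.lt_succ_self j), rfl⟩
          · exact (Finset.image_subset_image
              (Finset.range_subset_range.2 (by omega))) (hF1 hx')
        · rw [Finset.sum_insert hajF, hF2]
          omega
  -- the sum of a 0 .. a k equals β - 1
  have hS1 : β - 1 ≤ ∑ i ∈ Finset.range (k+1), a i := by
    obtain ⟨F, hF1, hF2⟩ := hcover (β - 1) (by omega)
    have : ∑ x ∈ F, x ≤ ∑ x ∈ Finset.image a (Finset.range (k+1)), x :=
      Finset.sum_le_sum_of_subset hF1
    rw [hF2, hsum_image] at this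
    exact this
  have hS2 : ∑ i ∈ Finset.range (k+1), a i = β - 1 := by
    by_contra hS
    have hSge : β ≤ ∑ i ∈ Finset.range (k+1), a i := by omega
    obtain ⟨F, hF1, hF2⟩ := hcomplete (k+1) le_rfl β hSge
    refine hβnotP ⟨F, ?_, hF2⟩
    intro x hx
    obtain ⟨i, _, hia⟩ := Finset.mem_image.1 (hF1 hx)
    exact ⟨i, hia⟩
  -- a (k+1) = β + 1
  have hak1 : a (k+1) = β + 1 := by
    obtain ⟨F, hF1, hF2⟩ := hmemP (β + 1) (hnotb_mid _ (by omega) (by omega))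
    have hx : ∃ x ∈ F, a (k+1) ≤ x := by
      by_contra hno
      push_neg at hno
      have : ∑ x ∈ F, x ≤ ∑ x ∈ Finset.image a (Finset.range (k+1)), x :=
        Finset.sum_le_sum_of_subset (hcap F (k+1) hF1 hno)
      rw [hF2, hsum_image, hS2] at this
      omega
    obtain ⟨x, hxF, hxle⟩ := hx
    have := helem F x hxF
    rw [hF2] at this
    omega
  -- main argument
  have hN : β < a (k+2) + a (k+3) + β := by
    have := hapos (k+2); omega
  obtain ⟨F, hF1, hF2⟩ := hmemP _ (hnotb_mid _ hN hlt)
  have hFG : F ⊆ Finset.image a (Finset.range (k+4)) := by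
    apply hcap F (k+4) hF1
    intro x hx
    have := helem F x hx
    rw [hF2] at this
    omega
  have hGsum : ∑ x ∈ Finset.image a (Finset.range (k+4)), x
      = a (k+2) + a (k+3) + β + β := by
    rw [hsum_image]
    rw [show k + 4 = (k+1) + 1 + 1 + 1 by omega]
    rw [Finset.sum_range_succ, Finset.sum_range_succ, Finset.sum_range_succ, hS2]
    rw [show k + 1 + 1 + 1 = k + 3 by omega, show k + 1 + 1 = k + 2 by omega, hak1]
    omega
  have hsdiff := Finset.sum_sdiff (f := id) hFG
  apply hβnotP
  refine ⟨Finset.image a (Finset.range (k+4)) \ F, ?_, ?_⟩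
  · intro x hx
    obtain ⟨i, _, hia⟩ := Finset.mem_image.1 (Finset.mem_sdiff.1 (Finset.mem_coe.1 hx)).1
    exact ⟨i, hia⟩
  · simp only [id_eq] at hsdiff
    rw [hF2, hGsum] at hsdiff
    omega
end

section
/- Let A = {a1 < a2 < ...} and B = {b1 < b2 < ...} be two infinite sequences of positive integers with b1 > 1 such that P(A) = ℕ \ B, and let k be the index with a_k < b1 < a_{k+1}. If 3·b1 + 5 ≤ b2 ≤ 6·b1 + 10 and a_{k+2} + a_{k+3} + b1 < b2, then a_{k+4} ≠ a_{k+2} + a_{k+3}. -/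
namespace Stmt9Aux

/-- Subset sums of the first `m` elements of the sequence `a`. -/
def PP (a : ℕ → ℕ) (m : ℕ) : Set ℕ :=
  {n | ∃ F : Finset ℕ, F ⊆ (Finset.range m).image a ∧ ∑ x ∈ F, x = n}

variable {a : ℕ → ℕ}

lemma PP_zero (n : ℕ) : n ∈ PP a 0 ↔ n = 0 := by
  constructor
  · rintro ⟨F, hF, rfl⟩
    simp only [Finset.range_zero, Finset.image_empty, Finset.subset_empty] at hF
    subst hF; simp
  · rintro rfl; exact ⟨∅, by simp⟩

lemma PP_subset_PA (m : ℕ) : PP a m ⊆ subsetSums (Set.range a) := by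
  rintro n ⟨F, hF, rfl⟩
  refine ⟨F, ?_, rfl⟩
  intro x hx
  have h1 := hF hx
  simp only [Finset.mem_image, Finset.mem_range] at h1
  obtain ⟨j, _, rfl⟩ := h1
  exact ⟨j, rfl⟩

lemma PP_le (ha : StrictMono a) {m n : ℕ} (h : n ∈ PP a m) :
    n ≤ ∑ i ∈ Finset.range m, a i := by
  obtain ⟨F, hF, rfl⟩ := h
  have h1 : ∑ x ∈ F, x ≤ ∑ x ∈ (Finset.range m).image a, x :=
    Finset.sum_le_sum_of_subset hF
  rwa [Finset.sum_image (fun i _ j _ h => ha.injective h)] at h1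

lemma decomp (ha : StrictMono a) {m n : ℕ}
    (h : n ∈ subsetSums (Set.range a)) :
    n ∈ PP a m ∨ ∃ i, m ≤ i ∧ a i ≤ n := by
  obtain ⟨F, hF, rfl⟩ := h
  by_cases hc : ∀ x ∈ F, ∃ j, j < m ∧ a j = x
  · left
    refine ⟨F, ?_, rfl⟩
    intro x hx
    obtain ⟨j, hj, rfl⟩ := hc x hx
    exact Finset.mem_image.2 ⟨j, Finset.mem_range.2 hj, rfl⟩
  · right
    push_neg at hc
    obtain ⟨x, hxF, hx⟩ := hc
    obtain ⟨j, rfl⟩ := hF (Finset.mem_coe.mpr hxF)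
    refine ⟨j, ?_, Finset.single_le_sum (fun i _ => Nat.zero_le i) hxF⟩
    by_contra hcon
    exact hx j (by omega) rfl

lemma PP_succ (ha : StrictMono a) (m n : ℕ) :
    n ∈ PP a (m + 1) ↔ n ∈ PP a m ∨ ∃ t ∈ PP a m, n = a m + t := by
  have hnotmem : a m ∉ (Finset.range m).image a := by
    simp only [Finset.mem_image, Finset.mem_range]
    rintro ⟨j, hj, hja⟩
    exact absurd (ha.injective hja) (by omega)
  have himg : (Finset.range (m + 1)).image a
      = insert (a m) ((Finset.range m).image a) := by
    rw [Finset.range_add_one, Finset.image_insert]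
  constructor
  · rintro ⟨F, hF, rfl⟩
    rw [himg] at hF
    by_cases hm : a m ∈ F
    · right
      refine ⟨(∑ x ∈ F.erase (a m), x), ⟨F.erase (a m), ?_, rfl⟩, ?_⟩
      · intro x hx
        have h1 := hF (Finset.mem_of_mem_erase hx)
        rcases Finset.mem_insert.mp h1 with h | h
        · exact absurd h (Finset.ne_of_mem_erase hx)
        · exact h
      · exact (Finset.add_sum_erase _ _ hm).symm
    · left
      refine ⟨F, ?_, rfl⟩
      intro x hx
      rcases Finset.mem_insert.mp (hF hx) with h | h
      · subst h; exact absurd hx hm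
      · exact h
  · rintro (⟨F, hF, rfl⟩ | ⟨t, ⟨F, hF, rfl⟩, rfl⟩)
    · exact ⟨F, by rw [himg]; exact hF.trans (Finset.subset_insert _ _), rfl⟩
    · refine ⟨insert (a m) F, ?_, ?_⟩
      · rw [himg]; exact Finset.insert_subset_insert _ hF
      · rw [Finset.sum_insert (fun hmem => hnotmem (hF hmem))]

end Stmt9Aux

open Stmt9Aux

/-- If `3b₁+5 ≤ b₂ ≤ 6b₁+10` and `a_{k+2}+a_{k+3}+b₁ < b₂` then
`a_{k+4} ≠ a_{k+2}+a_{k+3}`.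
Here `a i`, `b i` are the `(i+1)`-st elements of `A`, `B`. -/
theorem stmt9 (a b : ℕ → ℕ) (ha : StrictMono a) (hapos : ∀ i, 0 < a i)
    (hb : StrictMono b) (hb1 : 1 < b 0)
    (hPA : subsetSums (Set.range a) = Set.univ \ Set.range b)
    (k : ℕ) (hk1 : a k < b 0) (hk2 : b 0 < a (k + 1))
    (hlow : 3 * b 0 + 5 ≤ b 1) (hhigh : b 1 ≤ 6 * b 0 + 10)
    (hlt : a (k + 2) + a (k + 3) + b 0 < b 1) :
    a (k + 4) ≠ a (k + 2) + a (k + 3) := by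
  intro hN
  have hb01 : b 0 < b 1 := hb (by omega)
  have hPA' : ∀ n, n ∈ subsetSums (Set.range a) ↔ n ∉ Set.range b := by
    intro n; rw [hPA]; simp
  have hbB : b 0 ∉ subsetSums (Set.range a) := by
    intro h
    exact (hPA' _).mp h ⟨0, rfl⟩
  have hmemPA : ∀ n, n ≠ b 0 → n < b 1 → n ∈ subsetSums (Set.range a) := by
    intro n hne hlt'
    rw [hPA']
    rintro ⟨j, rfl⟩
    match j with
    | 0 => exact hne rfl
    | j + 1 =>
      have h1 : b 1 ≤ b (j + 1) := hb.monotone (by omega)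
      omega
  -- Completeness of the first k+1 elements
  have Cov : ∀ j, j ≤ k + 1 →
      (∑ i ∈ Finset.range j, a i) < b 0 ∧
      ∀ n, n ≤ ∑ i ∈ Finset.range j, a i → n ∈ PP a j := by
    intro j
    induction j with
    | zero =>
      intro _
      rw [Finset.sum_range_zero]
      refine ⟨by omega, ?_⟩
      intro n hn
      rw [PP_zero]; omega
    | succ j ih =>
      intro hj
      obtain ⟨hs, hcov⟩ := ih (by omega)
      have haj_lt : a j < b 0 :=
        lt_of_le_of_lt (ha.monotone (by omega : j ≤ k)) hk1
      have haj_pos : 0 < a j := hapos j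
      set s := ∑ i ∈ Finset.range j, a i with hs_def
      have hs1 : s + 1 < b 0 := by
        rcases Nat.lt_or_ge (s + 1) (b 0) with h | h
        · exact h
        · exfalso
          have hseq : s + 1 = b 0 := by omega
          have hmem : b 0 ∈ PP a (j + 1) := by
            rw [PP_succ ha]
            exact Or.inr ⟨b 0 - a j, hcov _ (by omega), by omega⟩
          exact hbB (PP_subset_PA _ hmem)
      have haj_le : a j ≤ s + 1 := by
        have h1 : (s + 1) ∈ subsetSums (Set.range a) :=
          hmemPA _ (by omega) (by omega)
        rcases decomp ha (m := j) h1 with h | ⟨i, him, hile⟩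
        · have := PP_le ha h; omega
        · exact le_trans (ha.monotone him) hile
      have hsum_succ : ∑ i ∈ Finset.range (j + 1), a i = s + a j := by
        rw [Finset.sum_range_succ]
      rw [hsum_succ]
      constructor
      · by_contra h
        push_neg at h
        have hmem : b 0 ∈ PP a (j + 1) := by
          rw [PP_succ ha]
          exact Or.inr ⟨b 0 - a j, hcov _ (by omega), by omega⟩
        exact hbB (PP_subset_PA _ hmem)
      · intro n hn
        rcases le_or_gt n s with h | h
        · rw [PP_succ ha]
          exact Or.inl (hcov _ h)
        · rw [PP_succ ha]
          exact Or.inr ⟨n - a j, hcov _ (by omega), by omega⟩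
  obtain ⟨hslt, hscov⟩ := Cov (k + 1) le_rfl
  set s := ∑ i ∈ Finset.range (k + 1), a i with hs_def
  have hsge : b 0 - 1 ≤ s := by
    have h1 : (b 0 - 1) ∈ subsetSums (Set.range a) :=
      hmemPA _ (by omega) (by omega)
    rcases decomp ha (m := k + 1) h1 with h | ⟨i, him, hile⟩
    · exact PP_le ha h
    · have := ha.monotone him; omega
  have D1 : ∀ n, n ∈ PP a (k + 1) ↔ n < b 0 := by
    intro n
    constructor
    · intro h
      have := PP_le ha h; omega
    · intro h
      exact hscov n (by omega)
  -- a (k+1) = b 0 + 1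
  have hak1 : a (k + 1) = b 0 + 1 := by
    have h1 : (b 0 + 1) ∈ subsetSums (Set.range a) :=
      hmemPA _ (by omega) (by omega)
    rcases decomp ha (m := k + 1) h1 with h | ⟨i, him, hile⟩
    · rw [D1] at h; omega
    · have := ha.monotone him; omega
  have D2 : ∀ n, n ∈ PP a (k + 2) ↔ (n ≤ 2 * b 0 ∧ n ≠ b 0) := by
    intro n
    rw [show k + 2 = (k + 1) + 1 from rfl, PP_succ ha]
    constructor
    · rintro (h | ⟨t, ht, hteq⟩)
      · rw [D1] at h; omega
      · rw [D1] at ht; omega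
    · intro h
      by_cases hc : n < b 0
      · exact Or.inl ((D1 n).mpr hc)
      · exact Or.inr ⟨n - (b 0 + 1), (D1 _).mpr (by omega), by omega⟩
  have hak2_lb : b 0 + 2 ≤ a (k + 2) := by
    have := ha (show k + 1 < k + 2 by omega); omega
  have hak2_ub : a (k + 2) ≤ 2 * b 0 + 1 := by
    have h1 : (2 * b 0 + 1) ∈ subsetSums (Set.range a) :=
      hmemPA _ (by omega) (by omega)
    rcases decomp ha (m := k + 2) h1 with h | ⟨i, him, hile⟩
    · rw [D2] at h; omega
    · have := ha.monotone him; omega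
  have D3 : ∀ n, n ∈ PP a (k + 3) ↔
      (n ≤ a (k + 2) + 2 * b 0 ∧ n ≠ b 0 ∧ n ≠ a (k + 2) + b 0) := by
    intro n
    rw [show k + 3 = (k + 2) + 1 from rfl, PP_succ ha]
    constructor
    · rintro (h | ⟨t, ht, hteq⟩)
      · rw [D2] at h; omega
      · rw [D2] at ht; omega
    · intro h
      by_cases hc : n ≤ 2 * b 0 ∧ n ≠ b 0
      · exact Or.inl ((D2 n).mpr hc)
      · exact Or.inr ⟨n - a (k + 2), (D2 _).mpr (by omega), by omega⟩
  have hak3_lb : a (k + 2) + 1 ≤ a (k + 3) := by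
    have := ha (show k + 2 < k + 3 by omega); omega
  have hak3_pos : 0 < a (k + 3) := hapos _
  have hak3_ub : a (k + 3) ≤ a (k + 2) + b 0 := by
    have h1 : (a (k + 2) + b 0) ∈ subsetSums (Set.range a) :=
      hmemPA _ (by omega) (by omega)
    rcases decomp ha (m := k + 3) h1 with h | ⟨i, him, hile⟩
    · rw [D3] at h; omega
    · have := ha.monotone him; omega
  have D4 : ∀ n, n ∈ PP a (k + 4) ↔
      (n ≤ a (k + 2) + a (k + 3) + 2 * b 0 ∧ n ≠ b 0 ∧
        n ≠ a (k + 2) + a (k + 3) + b 0) := by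
    intro n
    rw [show k + 4 = (k + 3) + 1 from rfl, PP_succ ha]
    constructor
    · rintro (h | ⟨t, ht, hteq⟩)
      · rw [D3] at h; omega
      · rw [D3] at ht; omega
    · intro h
      by_cases hc : n ≤ a (k + 2) + 2 * b 0 ∧ n ≠ b 0 ∧ n ≠ a (k + 2) + b 0
      · exact Or.inl ((D3 n).mpr hc)
      · exact Or.inr ⟨n - a (k + 3), (D3 _).mpr (by omega), by omega⟩
  have D5 : ∀ n, n ∈ PP a (k + 5) ↔
      (n ≤ 2 * (a (k + 2) + a (k + 3)) + 2 * b 0 ∧ n ≠ b 0 ∧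
        n ≠ a (k + 2) + a (k + 3) + b 0 ∧
        n ≠ 2 * (a (k + 2) + a (k + 3)) + b 0) := by
    intro n
    rw [show k + 5 = (k + 4) + 1 from rfl, PP_succ ha]
    constructor
    · rintro (h | ⟨t, ht, hteq⟩)
      · rw [D4] at h; omega
      · rw [D4] at ht; omega
    · intro h
      by_cases hc : n ≤ a (k + 2) + a (k + 3) + 2 * b 0 ∧ n ≠ b 0 ∧
          n ≠ a (k + 2) + a (k + 3) + b 0
      · exact Or.inl ((D4 n).mpr hc)
      · exact Or.inr ⟨n - a (k + 4), (D4 _).mpr (by omega), by omega⟩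
  have hNlb : 2 * b 0 + 5 ≤ a (k + 2) + a (k + 3) := by omega
  -- b 1 must equal 2N + b 0
  have hb2 : b 1 = 2 * (a (k + 2) + a (k + 3)) + b 0 := by
    by_contra hne
    have hmem : b 1 ∈ PP a (k + 5) := (D5 _).mpr (by omega)
    exact (hPA' _).mp (PP_subset_PA _ hmem) ⟨1, rfl⟩
  -- N + b 0 representable forces an element a (k+5) ≤ N + b 0
  have hNB : (a (k + 2) + a (k + 3) + b 0) ∈ subsetSums (Set.range a) :=
    hmemPA _ (by omega) (by omega)
  have hck5 : a (k + 5) ≤ a (k + 2) + a (k + 3) + b 0 := by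
    rcases decomp ha (m := k + 5) hNB with h | ⟨i, him, hile⟩
    · exfalso; rw [D5] at h; omega
    · exact le_trans (ha.monotone him) hile
  have hck5_lb : a (k + 2) + a (k + 3) < a (k + 5) := by
    have := ha (show k + 4 < k + 5 by omega); omega
  -- then b 1 = 2N + b 0 is representable: contradiction
  have hfin : b 1 ∈ PP a (k + 6) := by
    rw [show k + 6 = (k + 5) + 1 from rfl, PP_succ ha]
    exact Or.inr ⟨2 * (a (k + 2) + a (k + 3)) + b 0 - a (k + 5),
      (D5 _).mpr (by omega), by omega⟩
  exact (hPA' _).mp (PP_subset_PA _ hfin) ⟨1, rfl⟩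
end

section
/- Let A = {a1 < a2 < ...} and B = {b1 < b2 < ...} be two infinite sequences of positive integers with b1 > 1 such that P(A) = ℕ \ B, and let k be the index with a_k < b1 < a_{k+1}. If 3·b1 + 5 ≤ b2 ≤ 6·b1 + 10, a_{k+2} + a_{k+3} + b1 < b2, and a_{k+2} + a_{k+3} + a_{k+4} + b1 < b2, then a_{k+5} ≠ a_{k+2} + a_{k+3} + a_{k+4}. -/
/-- If `3b₁+5 ≤ b₂ ≤ 6b₁+10`, `a_{k+2}+a_{k+3}+b₁ < b₂` and
`a_{k+2}+a_{k+3}+a_{k+4}+b₁ < b₂`, then `a_{k+5} ≠ a_{k+2}+a_{k+3}+a_{k+4}`.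
Here `a i`, `b i` are the `(i+1)`-st elements of `A`, `B`. -/
theorem stmt10 (a b : ℕ → ℕ) (ha : StrictMono a) (hapos : ∀ i, 0 < a i)
    (hb : StrictMono b) (hb1 : 1 < b 0)
    (hPA : subsetSums (Set.range a) = Set.univ \ Set.range b)
    (k : ℕ) (hk1 : a k < b 0) (hk2 : b 0 < a (k + 1))
    (hlow : 3 * b 0 + 5 ≤ b 1) (hhigh : b 1 ≤ 6 * b 0 + 10)
    (hlt1 : a (k + 2) + a (k + 3) + b 0 < b 1)
    (hlt2 : a (k + 2) + a (k + 3) + a (k + 4) + b 0 < b 1) :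
    a (k + 5) ≠ a (k + 2) + a (k + 3) + a (k + 4) := by
  intro h
  set S := a (k + 2) + a (k + 3) + a (k + 4) with hS
  -- lower bound on S
  have h1 : a (k + 1) + 1 ≤ a (k + 2) := ha (by omega)
  have h2 : a (k + 2) + 1 ≤ a (k + 3) := ha (by omega)
  have h3 : a (k + 3) + 1 ≤ a (k + 4) := ha (by omega)
  have hSlb : 3 * b 0 + 9 ≤ S := by omega
  set c := b 1 - S with hc
  have hc0 : b 0 < c := by omega
  have hc1 : c < b 1 := by omega
  have hcS : c < S := by omega
  -- c is not in range b
  have hcb : c ∉ Set.range b := by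
    rintro ⟨j, hj'⟩
    rcases Nat.eq_zero_or_pos j with rfl | hj
    · omega
    · have : b 1 ≤ b j := hb.monotone hj
      omega
  -- so c ∈ subsetSums (range a)
  have hcP : c ∈ subsetSums (Set.range a) := by
    rw [hPA]; exact ⟨trivial, hcb⟩
  obtain ⟨F, hFsub, hFsum⟩ := hcP
  -- a (k+5) ∉ F
  have hnotmem : a (k + 5) ∉ F := by
    intro hmem
    have : a (k + 5) ≤ ∑ x ∈ F, x :=
      Finset.single_le_sum (fun x _ => Nat.zero_le x) hmem
    omega
  -- then b 1 ∈ subsetSums (range a)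
  have hb1P : b 1 ∈ subsetSums (Set.range a) := by
    refine ⟨insert (a (k + 5)) F, ?_, ?_⟩
    · intro x hx
      rcases Finset.mem_insert.mp (by exact_mod_cast hx) with rfl | hx'
      · exact ⟨k + 5, rfl⟩
      · exact hFsub hx'
    · rw [Finset.sum_insert hnotmem, hFsum]
      omega
  rw [hPA] at hb1P
  exact hb1P.2 ⟨1, rfl⟩
end

section
/- Let A = {a1 < a2 < ...} and B = {b1 < b2 < b3 < ...} be two infinite sequences of positive integers with b1 > 1 such that P(A) = ℕ \ B. If 3·b1 + 5 ≤ b2 ≤ 6·b1 + 10, then there exists a finite subset F of A such that P(F) = [0, b2 + b1] \ {b1, b2}. -/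
def IsUpper (E D : Finset ℕ) : Prop :=
  D ⊆ E ∧ ∀ x ∈ D, ∀ y ∈ E, y ∉ D → y < x

lemma upper_total {E D₁ D₂ : Finset ℕ} (h₁ : IsUpper E D₁) (h₂ : IsUpper E D₂) :
    D₁ ⊆ D₂ ∨ D₂ ⊆ D₁ := by
  by_contra h
  push_neg at h
  obtain ⟨x, hx, hx2⟩ := Finset.not_subset.mp h.1
  obtain ⟨y, hy, hy2⟩ := Finset.not_subset.mp h.2
  have h1 := h₁.2 x hx y (h₂.1 hy) hy2
  have h2 := h₂.2 y hy x (h₁.1 hx) hx2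
  omega

lemma nonempty_of_sum_pos {E : Finset ℕ} (h : 0 < ∑ x ∈ E, x) : E.Nonempty := by
  rcases E.eq_empty_or_nonempty with rfl | he
  · simp at h
  · exact he

lemma two_sum_bound {E : Finset ℕ} {c : ℕ} (h2 : 2 ≤ E.card) (hc : ∀ x ∈ E, c ≤ x) :
    2 * c + 1 ≤ ∑ x ∈ E, x := by
  obtain ⟨x, hx, y, hy, hxy⟩ := Finset.one_lt_card.mp h2
  have hsub : {x, y} ⊆ E := by
    intro z hz
    simp only [Finset.mem_insert, Finset.mem_singleton] at hz
    rcases hz with rfl | rfl <;> assumption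
  have hxysum : ∑ z ∈ ({x, y} : Finset ℕ), z = x + y := by
    rw [Finset.sum_insert (by simpa using hxy), Finset.sum_singleton]
  have hle : ∑ z ∈ ({x, y} : Finset ℕ), z ≤ ∑ z ∈ E, z :=
    Finset.sum_le_sum_of_subset hsub
  have hcx := hc x hx
  have hcy := hc y hy
  omega

lemma mem_le_sum {E : Finset ℕ} {x : ℕ} (hx : x ∈ E) : x ≤ ∑ y ∈ E, y :=
  Finset.single_le_sum (f := fun y => y) (fun i _ => Nat.zero_le i) hx

section Key

variable (m γ : ℕ) (W : Finset ℕ)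

/-- The (F)-lemma. -/
lemma keyF (hγ1 : 3*m+5 ≤ γ)
    (hz : ∀ E ⊆ W, (∑ x ∈ E, x) ≤ γ → (∑ x ∈ E, x) + m ≤ γ)
    (hc : ∀ n, n + m + 1 ≤ γ → n ≠ m → ∃ E ⊆ W, (∑ x ∈ E, x) ≤ n ∧ n < (∑ x ∈ E, x) + m)
    (E : Finset ℕ) (hE : E ⊆ W) (x : ℕ) (hxE : x ∈ E) (hxmin : ∀ y ∈ E, x ≤ y)
    (hxm : m + 1 ≤ x)
    (h1 : (∑ y ∈ E, y) + 1 ≤ γ) (h2 : (∑ y ∈ E, y) + m ≠ γ) :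
    (∑ y ∈ E, y) + x ≤ γ := by
  have hES : x ≤ ∑ y ∈ E, y := Finset.single_le_sum (fun i _ => Nat.zero_le i) hxE
  obtain ⟨D, hD, hD1, hD2⟩ := hc (γ - (∑ y ∈ E, y)) (by omega) (by omega)
  by_cases hdisj : Disjoint D E
  · exfalso
    have hsum : ∑ y ∈ D ∪ E, y = (∑ y ∈ D, y) + ∑ y ∈ E, y := Finset.sum_union hdisj
    have hle : ∑ y ∈ D ∪ E, y ≤ γ := by omega
    have := hz (D ∪ E) (Finset.union_subset hD hE) hle
    omega
  · obtain ⟨x', hx'⟩ := Finset.not_disjoint_iff.mp hdisj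
    have hxx' : x ≤ x' := hxmin x' hx'.2
    have hx'D : x' ≤ ∑ y ∈ D, y := Finset.single_le_sum (fun i _ => Nat.zero_le i) hx'.1
    omega

/-- The crossing lemma: any subset with sum `≥ γ+1` has an upper part summing to `γ-m`. -/
lemma keyCross (hm : 2 ≤ m) (hγ1 : 3*m+5 ≤ γ)
    (hW : ∀ e ∈ W, m+1 ≤ e ∧ e + m + 1 ≤ γ)
    (hz : ∀ E ⊆ W, (∑ x ∈ E, x) ≤ γ → (∑ x ∈ E, x) + m ≤ γ)
    (hc : ∀ n, n + m + 1 ≤ γ → n ≠ m → ∃ E ⊆ W, (∑ x ∈ E, x) ≤ n ∧ n < (∑ x ∈ E, x) + m)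
    (E : Finset ℕ) (hE : E ⊆ W) (hsum : γ + 1 ≤ ∑ x ∈ E, x) :
    ∃ D, IsUpper E D ∧ (∑ x ∈ D, x) + m = γ := by
  suffices aux : ∀ k (U : Finset ℕ), (E \ U).card ≤ k → IsUpper E U →
      (∑ x ∈ U, x) + m ≤ γ → ∃ D, IsUpper E D ∧ (∑ x ∈ D, x) + m = γ by
    refine aux (E \ ∅).card ∅ le_rfl ⟨Finset.empty_subset E, by simp⟩ (by simp; omega)
  intro k
  induction k with
  | zero =>
    intro U hcard hU hsumU
    exfalso
    have hEU : E \ U = ∅ := Finset.card_eq_zero.mp (Nat.le_zero.mp hcard)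
    have : E ⊆ U := by
      intro x hx
      by_contra hxu
      have : x ∈ E \ U := Finset.mem_sdiff.mpr ⟨hx, hxu⟩
      simp [hEU] at this
    have hUE : U = E := Finset.Subset.antisymm hU.1 this
    rw [hUE] at hsumU
    omega
  | succ k ih =>
    intro U hcard hU hsumU
    by_cases hEq : (∑ x ∈ U, x) + m = γ
    · exact ⟨U, hU, hEq⟩
    have hne : (E \ U).Nonempty := by
      rcases (E \ U).eq_empty_or_nonempty with hemp | hne
      · exfalso
        have : E ⊆ U := by
          intro x hx
          by_contra hxu
          have : x ∈ E \ U := Finset.mem_sdiff.mpr ⟨hx, hxu⟩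
          simp [hemp] at this
        have hUE : U = E := Finset.Subset.antisymm hU.1 this
        rw [hUE] at hsumU
        omega
      · exact hne
    set y := (E \ U).max' hne with hy_def
    have hymem : y ∈ E \ U := (E \ U).max'_mem hne
    have hyE : y ∈ E := (Finset.mem_sdiff.mp hymem).1
    have hyU : y ∉ U := (Finset.mem_sdiff.mp hymem).2
    have hU'up : IsUpper E (insert y U) := by
      constructor
      · exact Finset.insert_subset hyE hU.1
      · intro x hx y' hy' hy'n
        have hy'U : y' ∉ U := fun h => hy'n (Finset.mem_insert_of_mem h)
        have hy'y : y' ≠ y := fun h => hy'n (h ▸ Finset.mem_insert_self y U)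
        rcases Finset.mem_insert.mp hx with rfl | hxU
        · have : y' ≤ y := (E \ U).le_max' y' (Finset.mem_sdiff.mpr ⟨hy', hy'U⟩)
          omega
        · exact hU.2 x hxU y' hy' hy'U
    have hsU' : ∑ x ∈ insert y U, x = y + ∑ x ∈ U, x := Finset.sum_insert hyU
    have hcase : (∑ x ∈ insert y U, x) + m ≤ γ := by
      by_contra hgt
      push_neg at hgt
      have h1 : γ + 1 ≤ ∑ x ∈ insert y U, x := by
        by_contra hle
        push_neg at hle
        have := hz (insert y U) (hU'up.1.trans hE) (by omega)
        omega
      rcases U.eq_empty_or_nonempty with rfl | hUne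
      · have := (hW y (hE hyE)).2
        simp only [Finset.sum_empty] at hsU'
        omega
      · have hmin := U.min'_mem hUne
        have hminW := (hW _ (hE (hU.1 hmin))).1
        have hFU := keyF m γ W hγ1 hz hc U (hU.1.trans hE) (U.min' hUne) hmin
          (fun z hz' => U.min'_le z hz') hminW (by omega) hEq
        have hylt : y < U.min' hUne := hU.2 _ hmin y hyE hyU
        omega
    have hcard' : (E \ insert y U).card ≤ k := by
      have heq : E \ insert y U = (E \ U).erase y := by
        ext z
        simp only [Finset.mem_sdiff, Finset.mem_erase, Finset.mem_insert]
        tauto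
      rw [heq]
      have := Finset.card_erase_of_mem hymem
      omega
    exact ih (insert y U) hcard' hU'up hcase

end Key

lemma keylemma (m γ : ℕ) (hm : 2 ≤ m) (hγ1 : 3*m+5 ≤ γ) (hγ2 : γ ≤ 6*m+10)
    (W : Finset ℕ)
    (hW : ∀ e ∈ W, m+1 ≤ e ∧ e + m + 1 ≤ γ)
    (hz : ∀ E ⊆ W, (∑ x ∈ E, x) ≤ γ → (∑ x ∈ E, x) + m ≤ γ)
    (hc : ∀ n, n + m + 1 ≤ γ → n ≠ m → ∃ E ⊆ W, (∑ x ∈ E, x) ≤ n ∧ n < (∑ x ∈ E, x) + m) :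
    (∑ x ∈ W, x) = γ + 1 ∧ m+1 ∈ W := by
  -- step 1: m+1 ∈ W
  have step1 : m + 1 ∈ W := by
    obtain ⟨E, hE, h1, h2⟩ := hc (m+1) (by omega) (by omega)
    have hne : E.Nonempty := nonempty_of_sum_pos (by omega)
    obtain ⟨x, hx⟩ := hne
    have hxm := (hW x (hE hx)).1
    have hxle : x ≤ ∑ y ∈ E, y := Finset.single_le_sum (fun i _ => Nat.zero_le i) hx
    have hxeq : x = m + 1 := by omega
    exact hxeq ▸ hE hx
  refine ⟨?_, step1⟩
  -- step 2 : γ + 1 ≤ σ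
  have step2 : γ + 1 ≤ ∑ x ∈ W, x := by
    by_contra h
    push_neg at h
    have hσm : (∑ x ∈ W, x) + m ≤ γ := hz W Finset.Subset.rfl (by omega)
    obtain ⟨E₁, hE₁, h11, h12⟩ := hc (γ - m - 1) (by omega) (by omega)
    have hs1 : ∑ x ∈ E₁, x ≤ ∑ x ∈ W, x := Finset.sum_le_sum_of_subset hE₁
    obtain ⟨E₂, hE₂, h21, h22⟩ := hc ((∑ x ∈ W, x) - 1) (by omega) (by omega)
    have hsd : (∑ x ∈ W \ E₂, x) + ∑ x ∈ E₂, x = ∑ x ∈ W, x := Finset.sum_sdiff hE₂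
    have hne2 : (W \ E₂).Nonempty := nonempty_of_sum_pos (by omega)
    obtain ⟨e, he⟩ := hne2
    have he1 := (hW e (Finset.mem_sdiff.mp he).1).1
    have he2 : e ≤ ∑ x ∈ W \ E₂, x := Finset.single_le_sum (fun i _ => Nat.zero_le i) he
    omega
  -- step 3: σ ≤ γ + 1
  by_contra hσ
  have hσ2 : γ + 2 ≤ ∑ x ∈ W, x := by omega
  obtain ⟨D, hDup, hDsum⟩ := keyCross m γ W hm hγ1 hW hz hc W Finset.Subset.rfl (by omega)
  have hTsum : (∑ x ∈ W \ D, x) + ∑ x ∈ D, x = ∑ x ∈ W, x := Finset.sum_sdiff hDup.1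
  -- τ := ∑ x ∈ W \ D, x   (τ ≥ m + 2)
  have hm1T : m + 1 ∈ W \ D := by
    by_cases h : m + 1 ∈ D
    · exfalso
      have hTne : (W \ D).Nonempty := nonempty_of_sum_pos (by omega)
      obtain ⟨y, hy⟩ := hTne
      have hyW : y ∈ W := (Finset.mem_sdiff.mp hy).1
      have h1 := hDup.2 (m+1) h y hyW (Finset.mem_sdiff.mp hy).2
      have h2 := (hW y hyW).1
      omega
    · exact Finset.mem_sdiff.mpr ⟨step1, h⟩
  have hsum_erase : (∑ x ∈ (W \ D).erase (m+1), x) + (m+1) = ∑ x ∈ W \ D, x :=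
    Finset.sum_erase_add _ _ hm1T
  have hT' : ((W \ D).erase (m+1)).Nonempty := nonempty_of_sum_pos (by omega)
  obtain ⟨u, hu⟩ := hT'
  have huT : u ∈ W \ D := Finset.mem_of_mem_erase hu
  have hune : u ≠ m + 1 := Finset.ne_of_mem_erase hu
  have hu1 := (hW u (Finset.mem_sdiff.mp huT).1).1
  have hu2 : m + 2 ≤ u := by omega
  have hule : u ≤ ∑ x ∈ (W \ D).erase (m+1), x := Finset.single_le_sum (fun i _ => Nat.zero_le i) hu
  have hτbig : 2*m + 3 ≤ ∑ x ∈ W \ D, x := by omega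
  by_cases hτγ : (∑ x ∈ W \ D, x) ≤ γ
  · -- mirror/max argument
    have hτm : (∑ x ∈ W \ D, x) + m ≤ γ := hz _ Finset.sdiff_subset hτγ
    -- σ + 2m ≤ 2γ and σ ≥ γ + m + 3
    set σ := ∑ x ∈ W, x with hσdef
    have hσup : σ + 2*m ≤ 2*γ := by omega
    have hσlo : γ + m + 3 ≤ σ := by omega
    classical
    set SS := (W.powerset.image (fun E => ∑ x ∈ E, x)).filter (fun s => s + γ + 1 ≤ σ) with hSS
    have hm1SS : m + 1 ∈ SS := by
      refine Finset.mem_filter.mpr ⟨?_, by omega⟩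
      refine Finset.mem_image.mpr ⟨{m+1}, Finset.mem_powerset.mpr (by simpa using step1), by simp⟩
    have hSSne : SS.Nonempty := ⟨m+1, hm1SS⟩
    set t0 := SS.max' hSSne with ht0def
    have ht0 : t0 ∈ SS := SS.max'_mem hSSne
    have ht0a : m + 1 ≤ t0 := SS.le_max' _ hm1SS
    have ht0b : t0 + γ + 1 ≤ σ := (Finset.mem_filter.mp ht0).2
    obtain ⟨E₃, hE₃, h31, h32⟩ := hc (t0 + m) (by omega) (by omega)
    have hcPS : (∑ x ∈ E₃, x) ∈ W.powerset.image (fun E => ∑ x ∈ E, x) :=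
      Finset.mem_image.mpr ⟨E₃, Finset.mem_powerset.mpr hE₃, rfl⟩
    have hct0 : t0 < ∑ x ∈ E₃, x := by omega
    have hcnot : ¬ ((∑ x ∈ E₃, x) + γ + 1 ≤ σ) := by
      intro hcc
      have := SS.le_max' _ (Finset.mem_filter.mpr ⟨hcPS, hcc⟩)
      omega
    have hsd3 : (∑ x ∈ W \ E₃, x) + ∑ x ∈ E₃, x = σ := Finset.sum_sdiff hE₃
    have hzz := hz (W \ E₃) Finset.sdiff_subset (by omega)
    omega
  · -- counting argument
    push_neg at hτγ
    have hτγ1 : γ + 1 ≤ ∑ x ∈ W \ D, x := hτγ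
    have hDne : D.Nonempty := nonempty_of_sum_pos (by omega)
    have hD2 : 2 ≤ D.card := by
      by_contra hcd
      push_neg at hcd
      interval_cases hq : D.card
      · simp [Finset.card_eq_zero.mp hq] at hDsum; omega
      · obtain ⟨d, hd⟩ := Finset.card_eq_one.mp hq
        rw [hd, Finset.sum_singleton] at hDsum
        have := (hW d (hDup.1 (hd ▸ Finset.mem_singleton_self d))).2
        omega
    obtain ⟨w₁, hw₁, w₂, hw₂, hw12⟩ := Finset.one_lt_card.mp hD2
    have hQ : ∀ w ∈ D, ∃ Q, IsUpper (W \ D) Q ∧ (∑ x ∈ Q, x) = w ∧ 2 ≤ Q.card := by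
      intro w hwD
      have hwW : w ∈ W := hDup.1 hwD
      have hwb := hW w hwW
      have hE'sum : (∑ x ∈ W.erase w, x) + w = ∑ x ∈ W, x := Finset.sum_erase_add W _ hwW
      obtain ⟨G, hGup, hGsum⟩ := keyCross m γ W hm hγ1 hW hz hc (W.erase w)
        (Finset.erase_subset _ _) (by omega)
      have hD'sub : D.erase w ⊆ W.erase w := by
        intro x hx
        exact Finset.mem_erase.mpr ⟨(Finset.mem_erase.mp hx).1, hDup.1 (Finset.mem_of_mem_erase hx)⟩
      have hD'up : IsUpper (W.erase w) (D.erase w) := by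
        refine ⟨hD'sub, ?_⟩
        intro x hx y hy hyn
        have hyW : y ∈ W := Finset.mem_of_mem_erase hy
        have hyw : y ≠ w := Finset.ne_of_mem_erase hy
        have hyD : y ∉ D := fun hyD => hyn (Finset.mem_erase.mpr ⟨hyw, hyD⟩)
        exact hDup.2 x (Finset.mem_of_mem_erase hx) y hyW hyD
      have hD'sum : (∑ x ∈ D.erase w, x) + w = ∑ x ∈ D, x := Finset.sum_erase_add D _ hwD
      rcases upper_total hGup hD'up with hsub | hsub
      · exfalso
        have : (∑ x ∈ G, x) ≤ ∑ x ∈ D.erase w, x :=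
          Finset.sum_le_sum_of_subset hsub
        omega
      · set Q := G \ D.erase w with hQdef
        have hQsum : (∑ x ∈ Q, x) + (∑ x ∈ D.erase w, x) = ∑ x ∈ G, x := Finset.sum_sdiff hsub
        have hQw : (∑ x ∈ Q, x) = w := by omega
        have hQT : Q ⊆ W \ D := by
          intro x hx
          have hxG : x ∈ G := (Finset.mem_sdiff.mp hx).1
          have hxE' : x ∈ W.erase w := hGup.1 hxG
          have hxnD' : x ∉ D.erase w := (Finset.mem_sdiff.mp hx).2
          refine Finset.mem_sdiff.mpr ⟨Finset.mem_of_mem_erase hxE', ?_⟩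
          intro hxD
          exact hxnD' (Finset.mem_erase.mpr ⟨Finset.ne_of_mem_erase hxE', hxD⟩)
        have hQup : IsUpper (W \ D) Q := by
          refine ⟨hQT, ?_⟩
          intro x hx y hy hyn
          have hyW : y ∈ W := (Finset.mem_sdiff.mp hy).1
          have hyD : y ∉ D := (Finset.mem_sdiff.mp hy).2
          have hyw : y ≠ w := fun h => hyD (h ▸ hwD)
          have hyE' : y ∈ W.erase w := Finset.mem_erase.mpr ⟨hyw, hyW⟩
          have hyG : y ∉ G := by
            intro hyG
            exact hyn (Finset.mem_sdiff.mpr ⟨hyG, fun hyD' => hyD (Finset.mem_of_mem_erase hyD')⟩)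
          exact hGup.2 x (Finset.mem_sdiff.mp hx).1 y hyE' hyG
        have hQne : Q.Nonempty := nonempty_of_sum_pos (by omega)
        have hQ2 : 2 ≤ Q.card := by
          by_contra hq
          push_neg at hq
          obtain ⟨q, hqmem⟩ := hQne
          have hcard1 : Q.card = 1 := le_antisymm (by omega) (Finset.card_pos.mpr ⟨q, hqmem⟩)
          obtain ⟨u', hu'⟩ := Finset.card_eq_one.mp hcard1
          rw [hu', Finset.sum_singleton] at hQw
          have : u' ∈ W \ D := hQT (hu' ▸ Finset.mem_singleton_self u')
          rw [hQw] at this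
          exact (Finset.mem_sdiff.mp this).2 hwD
        exact ⟨Q, hQup, hQw, hQ2⟩
    obtain ⟨Q₁, hQ₁up, hQ₁sum, hQ₁2⟩ := hQ w₁ hw₁
    obtain ⟨Q₂, hQ₂up, hQ₂sum, hQ₂2⟩ := hQ w₂ hw₂
    have hfinal : ∀ (Qa Qb : Finset ℕ) (wa wb : ℕ), wa ∈ D → wb ∈ D → wa ≠ wb →
        IsUpper (W \ D) Qa → IsUpper (W \ D) Qb → (∑ x ∈ Qa, x) = wa →
        (∑ x ∈ Qb, x) = wb → 2 ≤ Qa.card → Qa ⊆ Qb → False := by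
      intro Qa Qb wa wb hwa hwb hwab hQaup hQbup hQas hQbs hQa2 hsub
      have hne : Qa ≠ Qb := by
        intro h
        rw [h, hQbs] at hQas
        exact hwab hQas.symm
      obtain ⟨z, hzb, hza⟩ := Finset.exists_of_ssubset (Finset.ssubset_iff_subset_ne.mpr ⟨hsub, hne⟩)
      have hzT : z ∈ W \ D := hQbup.1 hzb
      have hz1 : m + 1 ≤ z := (hW z (Finset.mem_sdiff.mp hzT).1).1
      have hQa_lb : 2*(m+2) + 1 ≤ ∑ x ∈ Qa, x := by
        refine two_sum_bound hQa2 (fun x hx => ?_)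
        have := hQaup.2 x hx z hzT hza
        omega
      have hQb_lb : (∑ x ∈ Qa, x) + z ≤ ∑ x ∈ Qb, x := by
        have hins : insert z Qa ⊆ Qb := Finset.insert_subset hzb hsub
        have hsz : ∑ x ∈ insert z Qa, x = z + ∑ x ∈ Qa, x := Finset.sum_insert hza
        have hle2 : (∑ x ∈ insert z Qa, x) ≤ ∑ x ∈ Qb, x :=
          Finset.sum_le_sum_of_subset hins
        omega
      have hpair : wa + wb ≤ ∑ x ∈ D, x := by
        have hs : ({wa, wb} : Finset ℕ) ⊆ D := by
          intro t ht
          simp only [Finset.mem_insert, Finset.mem_singleton] at ht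
          rcases ht with rfl | rfl <;> assumption
        have hps : ∑ x ∈ ({wa, wb} : Finset ℕ), x = wa + wb := by
          rw [Finset.sum_insert (by simpa using hwab), Finset.sum_singleton]
        have hle3 : (∑ x ∈ ({wa, wb} : Finset ℕ), x) ≤ ∑ x ∈ D, x :=
          Finset.sum_le_sum_of_subset hs
        omega
      omega
    rcases upper_total hQ₁up hQ₂up with hsub | hsub
    · exact hfinal Q₁ Q₂ w₁ w₂ hw₁ hw₂ hw12 hQ₁up hQ₂up hQ₁sum hQ₂sum hQ₁2 hsub
    · exact hfinal Q₂ Q₁ w₂ w₁ hw₂ hw₁ (Ne.symm hw12) hQ₂up hQ₁up hQ₂sum hQ₁sum hQ₂2 hsub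

/-- If `3b₁+5 ≤ b₂ ≤ 6b₁+10` then some finite subset `F` of `A` satisfies
`P(F) = [0, b₂+b₁] \ {b₁, b₂}`.
Here `a i`, `b i` are the `(i+1)`-st elements of `A`, `B`. -/
theorem stmt11 (a b : ℕ → ℕ) (ha : StrictMono a) (hapos : ∀ i, 0 < a i)
    (hb : StrictMono b) (hb1 : 1 < b 0)
    (hPA : subsetSums (Set.range a) = Set.univ \ Set.range b)
    (hlow : 3 * b 0 + 5 ≤ b 1) (hhigh : b 1 ≤ 6 * b 0 + 10) :
    ∃ F : Finset ℕ, ↑F ⊆ Set.range a ∧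
      subsetSums ↑F = Set.Icc 0 (b 1 + b 0) \ {b 0, b 1} := by
  classical
  set m := b 0 with hm_def
  set γ := b 1 with hγ_def
  have hm2 : 2 ≤ m := hb1
  have hγlow : 3*m + 5 ≤ γ := hlow
  have hγhigh : γ ≤ 6*m + 10 := hhigh
  have hmem : ∀ n : ℕ, n ∈ subsetSums (Set.range a) ↔ n ∉ Set.range b := by
    intro n
    rw [hPA]
    simp
  have hrep : ∀ n : ℕ, n < γ → n ≠ m →
      ∃ E : Finset ℕ, ↑E ⊆ Set.range a ∧ ∑ x ∈ E, x = n := by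
    intro n hn hnm
    have hnb : n ∉ Set.range b := by
      rintro ⟨i, rfl⟩
      match i with
      | 0 => exact hnm rfl
      | (k+1) =>
        have : γ ≤ b (k+1) := hb.monotone (by omega)
        omega
    exact (hmem n).mpr hnb
  have hnosum : ∀ E : Finset ℕ, ↑E ⊆ Set.range a →
      (∑ x ∈ E, x) ≠ m ∧ (∑ x ∈ E, x) ≠ γ := by
    intro E hE
    have h1 : (∑ x ∈ E, x) ∈ subsetSums (Set.range a) := ⟨E, hE, rfl⟩
    have h2 := (hmem _).mp h1
    constructor
    · intro h; exact h2 ⟨0, h.symm⟩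
    · intro h; exact h2 ⟨1, h.symm⟩
  have hposA : ∀ x : ℕ, x ∈ Set.range a → 1 ≤ x := by
    rintro x ⟨i, rfl⟩
    exact hapos i
  have hmnotA : m ∉ Set.range a := by
    intro hmA
    refine (hnosum {m} ?_).1 (by simp)
    simpa using hmA
  -- the small part
  set S : Finset ℕ := (Finset.range m).filter (fun x => x ∈ Set.range a) with hS_def
  have hSmem : ∀ x, x ∈ S ↔ x < m ∧ x ∈ Set.range a := by
    intro x
    simp [hS_def]
  have hScov : ∀ n, n < m → ∃ E ⊆ S, (∑ x ∈ E, x) = n := by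
    intro n hn
    obtain ⟨E, hE, hEs⟩ := hrep n (by omega) (by omega)
    refine ⟨E, ?_, hEs⟩
    intro x hx
    have hxle : x ≤ n := by
      have := mem_le_sum hx
      omega
    exact (hSmem x).mpr ⟨by omega, hE hx⟩
  have greedy : ∀ t : ℕ, (∑ x ∈ S.filter (· ≤ t), x) + 1 ≤ m ∧
      ∀ n, n ≤ ∑ x ∈ S.filter (· ≤ t), x →
        ∃ E ⊆ S.filter (· ≤ t), (∑ x ∈ E, x) = n := by
    intro t
    induction t with
    | zero =>
      have hemp : S.filter (· ≤ 0) = ∅ := by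
        refine Finset.filter_eq_empty_iff.mpr ?_
        intro x hx
        have := hposA x ((hSmem x).mp hx).2
        omega
      rw [hemp]
      simp only [Finset.sum_empty]
      exact ⟨by omega, fun n hn => ⟨∅, Finset.empty_subset _, by simpa using (Nat.le_zero.mp hn).symm⟩⟩
    | succ t ih =>
      obtain ⟨ihs, ihcov⟩ := ih
      by_cases hmemS : (t+1) ∈ S
      · have hnotin : (t+1) ∉ S.filter (· ≤ t) := by
          simp [Finset.mem_filter]
        have hins : S.filter (· ≤ t+1) = insert (t+1) (S.filter (· ≤ t)) := by
          ext x
          simp only [Finset.mem_filter, Finset.mem_insert]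
          constructor
          · rintro ⟨hx, hle⟩
            rcases Nat.eq_or_lt_of_le hle with heq | hlt
            · exact Or.inl heq
            · exact Or.inr ⟨hx, by omega⟩
          · rintro (rfl | ⟨hx, hle⟩)
            · exact ⟨hmemS, le_rfl⟩
            · exact ⟨hx, by omega⟩
        have htm : t + 1 < m := ((hSmem _).mp hmemS).1
        have hstep : t + 1 ≤ (∑ x ∈ S.filter (· ≤ t), x) + 1 := by
          by_contra hgt
          push_neg at hgt
          obtain ⟨E, hEs, hEsum⟩ := hrep ((∑ x ∈ S.filter (· ≤ t), x) + 1) (by omega) (by omega)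
          have hEsub : E ⊆ S.filter (· ≤ t) := by
            intro x hx
            have hx1 : x ≤ (∑ x ∈ S.filter (· ≤ t), x) + 1 := by
              have := mem_le_sum hx
              omega
            refine Finset.mem_filter.mpr ⟨(hSmem x).mpr ⟨by omega, hEs hx⟩, by omega⟩
          have hle : (∑ x ∈ E, x) ≤ ∑ x ∈ S.filter (· ≤ t), x :=
            Finset.sum_le_sum_of_subset hEsub
          omega
        have hnew : ((∑ x ∈ S.filter (· ≤ t), x) + (t+1)) + 1 ≤ m := by
          by_contra hge
          push_neg at hge
          obtain ⟨E, hEsub, hEsum⟩ := ihcov (m - (t+1)) (by omega)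
          have ha_notE : (t+1) ∉ E := fun h => hnotin (hEsub h)
          have hsubA : ↑(insert (t+1) E) ⊆ Set.range a := by
            intro x hx
            simp only [Finset.coe_insert, Set.mem_insert_iff] at hx
            rcases hx with rfl | hx
            · exact ((hSmem _).mp hmemS).2
            · exact ((hSmem _).mp (Finset.mem_filter.mp (hEsub hx)).1).2
          refine (hnosum _ hsubA).1 ?_
          rw [Finset.sum_insert ha_notE]
          omega
        rw [hins, Finset.sum_insert hnotin]
        refine ⟨by omega, ?_⟩
        intro n hn
        by_cases hns : n ≤ ∑ x ∈ S.filter (· ≤ t), x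
        · obtain ⟨E, h1, h2⟩ := ihcov n hns
          exact ⟨E, h1.trans (Finset.subset_insert _ _), h2⟩
        · push_neg at hns
          obtain ⟨E, h1, h2⟩ := ihcov (n - (t+1)) (by omega)
          have ha_notE : (t+1) ∉ E := fun h => hnotin (h1 h)
          refine ⟨insert (t+1) E, ?_, ?_⟩
          · exact Finset.insert_subset_insert _ h1
          · rw [Finset.sum_insert ha_notE]
            omega
      · have heqf : S.filter (· ≤ t+1) = S.filter (· ≤ t) := by
          ext x
          simp only [Finset.mem_filter]
          constructor
          · rintro ⟨hx, hle⟩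
            have : x ≠ t + 1 := fun h => hmemS (h ▸ hx)
            exact ⟨hx, by omega⟩
          · rintro ⟨hx, hle⟩
            exact ⟨hx, by omega⟩
        rw [heqf]
        exact ⟨ihs, ihcov⟩
  have hSfull : S.filter (· ≤ m) = S :=
    Finset.filter_true_of_mem (fun x hx => le_of_lt ((hSmem x).mp hx).1)
  have hSsumle : (∑ x ∈ S, x) + 1 ≤ m := by
    have := (greedy m).1
    rwa [hSfull] at this
  have hSsum : (∑ x ∈ S, x) + 1 = m := by
    obtain ⟨E, hE, hEs⟩ := hScov (m-1) (by omega)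
    have : (∑ x ∈ E, x) ≤ ∑ x ∈ S, x := Finset.sum_le_sum_of_subset hE
    omega
  -- the middle part
  set V : Finset ℕ :=
    (Finset.range γ).filter (fun x => x ∈ Set.range a ∧ m+1 ≤ x ∧ x + m + 1 ≤ γ) with hV_def
  have hVmem : ∀ x, x ∈ V ↔ x ∈ Set.range a ∧ m+1 ≤ x ∧ x + m + 1 ≤ γ := by
    intro x
    simp only [hV_def, Finset.mem_filter, Finset.mem_range]
    constructor
    · tauto
    · intro h
      exact ⟨by omega, h⟩
  have hdisjSV : ∀ {R E : Finset ℕ}, R ⊆ S → E ⊆ V → Disjoint R E := by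
    intro R E hR hE
    rw [Finset.disjoint_left]
    intro x hxR hxE
    have h1 := ((hSmem x).mp (hR hxR)).1
    have h2 := ((hVmem x).mp (hE hxE)).2.1
    omega
  have hVsubA : ∀ {E : Finset ℕ}, E ⊆ V → ↑E ⊆ Set.range a := by
    intro E hE x hx
    exact ((hVmem x).mp (hE hx)).1
  have hVW : ∀ e ∈ V, m+1 ≤ e ∧ e + m + 1 ≤ γ := fun e he => ((hVmem e).mp he).2
  have hVz : ∀ E ⊆ V, (∑ x ∈ E, x) ≤ γ → (∑ x ∈ E, x) + m ≤ γ := by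
    intro E hE hle
    by_contra hgt
    push_neg at hgt
    obtain ⟨R, hR, hRs⟩ := hScov (γ - ∑ x ∈ E, x) (by omega)
    have hdisj := hdisjSV hR hE
    have hsubA : ↑(E ∪ R) ⊆ Set.range a := by
      intro x hx
      simp only [Finset.coe_union, Set.mem_union] at hx
      rcases hx with hx | hx
      · exact hVsubA hE hx
      · exact ((hSmem x).mp (hR hx)).2
    refine (hnosum _ hsubA).2 ?_
    rw [Finset.sum_union hdisj.symm]
    omega
  have hVc : ∀ n, n + m + 1 ≤ γ → n ≠ m →
      ∃ E ⊆ V, (∑ x ∈ E, x) ≤ n ∧ n < (∑ x ∈ E, x) + m := by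
    intro n hn hnm
    obtain ⟨T, hT, hTs⟩ := hrep n (by omega) hnm
    have hsplit : (∑ x ∈ T.filter (fun x => m+1 ≤ x), x) +
        (∑ x ∈ T.filter (fun x => ¬ m+1 ≤ x), x) = n := by
      rw [Finset.sum_filter_add_sum_filter_not T _ (fun x => x)]
      exact hTs
    have hTc : T.filter (fun x => ¬ m+1 ≤ x) ⊆ S := by
      intro x hx
      have hx1 : x ∈ T := Finset.mem_of_mem_filter x hx
      have hx2 : ¬ m + 1 ≤ x := (Finset.mem_filter.mp hx).2
      have hxa : x ∈ Set.range a := hT hx1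
      have hxm : x ≠ m := by
        intro h
        rw [h] at hxa
        exact (hnosum {m} (by simpa using hxa)).1 (by simp)
      exact (hSmem x).mpr ⟨by omega, hxa⟩
    have hTcle : (∑ x ∈ T.filter (fun x => ¬ m+1 ≤ x), x) ≤ ∑ x ∈ S, x :=
      Finset.sum_le_sum_of_subset hTc
    refine ⟨T.filter (fun x => m+1 ≤ x), ?_, by omega, by omega⟩
    intro x hx
    have hx1 : x ∈ T := Finset.mem_of_mem_filter x hx
    have hx2 : m + 1 ≤ x := (Finset.mem_filter.mp hx).2
    have hxle : x ≤ n := by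
      have := mem_le_sum hx1
      omega
    exact (hVmem x).mpr ⟨hT hx1, hx2, by omega⟩
  obtain ⟨hVsum, hm1V⟩ := keylemma m γ hm2 hγlow hγhigh V hVW hVz hVc
  -- the answer
  refine ⟨S ∪ V, ?_, ?_⟩
  · intro x hx
    simp only [Finset.coe_union, Set.mem_union] at hx
    rcases hx with hx | hx
    · exact ((hSmem x).mp hx).2
    · exact ((hVmem x).mp hx).1
  have hdisj0 : Disjoint S V := hdisjSV (Finset.Subset.rfl) (Finset.Subset.rfl)
  have hFsum : ∑ x ∈ S ∪ V, x = γ + m := by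
    rw [Finset.sum_union hdisj0]
    omega
  ext n
  simp only [Set.mem_diff, Set.mem_Icc, Set.mem_insert_iff, Set.mem_singleton_iff]
  constructor
  · rintro ⟨E, hE, rfl⟩
    have hEF : E ⊆ S ∪ V := Finset.coe_subset.mp (by exact_mod_cast hE)
    have hsubA : ↑E ⊆ Set.range a := by
      intro x hx
      have := hEF hx
      simp only [Finset.mem_union] at this
      rcases this with h | h
      · exact ((hSmem x).mp h).2
      · exact ((hVmem x).mp h).1
    have hle : (∑ x ∈ E, x) ≤ ∑ x ∈ S ∪ V, x := Finset.sum_le_sum_of_subset hEF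
    have hns := hnosum E hsubA
    exact ⟨⟨Nat.zero_le _, by omega⟩, by tauto⟩
  · rintro ⟨⟨-, hn2⟩, hn3⟩
    push_neg at hn3
    obtain ⟨hnm, hnγ⟩ := hn3
    have mkwit : ∀ (E : Finset ℕ), E ⊆ V → (∑ x ∈ E, x) ≤ n → n < (∑ x ∈ E, x) + m →
        n ∈ subsetSums ↑(S ∪ V) := by
      intro E hE h1 h2
      obtain ⟨R, hR, hRs⟩ := hScov (n - ∑ x ∈ E, x) (by omega)
      have hdisj := hdisjSV hR hE
      refine ⟨E ∪ R, ?_, ?_⟩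
      · intro x hx
        simp only [Finset.coe_union, Set.mem_union] at hx ⊢
        rcases hx with hx | hx
        · exact Or.inr (hE hx)
        · exact Or.inl (hR hx)
      · rw [Finset.sum_union hdisj.symm]
        omega
    by_cases hc1 : n + m + 1 ≤ γ
    · obtain ⟨E, hE, h1, h2⟩ := hVc n hc1 hnm
      exact mkwit E hE h1 h2
    · push_neg at hc1
      by_cases hc2 : n < γ
      · -- use V.erase (m+1), sum γ - m
        have hers : (∑ x ∈ V.erase (m+1), x) + (m+1) = γ + 1 := by
          rw [Finset.sum_erase_add _ _ hm1V]
          exact hVsum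
        refine mkwit (V.erase (m+1)) (Finset.erase_subset _ _) (by omega) (by omega)
      · push_neg at hc2
        have hng : γ + 1 ≤ n := by omega
        refine mkwit V Finset.Subset.rfl (by omega) (by omega)
end

section
/- Let b1 and C be positive integers with C > 2·b1, and let F be a finite set of positive integers with P(F) = [0, C] \ {b1, C − b1}. If x is a positive integer with x ∉ F, b1 < x ≤ C − b1, and x ≠ C − 2·b1, then P(F ∪ {x}) = [0, C + x] \ {b1, C + x − b1}. -/
lemma mem_subsetSums_insert (x : ℕ) (F : Finset ℕ) (hx : x ∉ F) (n : ℕ) :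
    n ∈ subsetSums ↑(insert x F) ↔
      n ∈ subsetSums ↑F ∨ ∃ m ∈ subsetSums (↑F : Set ℕ), n = x + m := by
  constructor
  · rintro ⟨G, hG, rfl⟩
    rw [Finset.coe_subset] at hG
    by_cases hxG : x ∈ G
    · right
      refine ⟨∑ y ∈ G.erase x, y, ⟨G.erase x, ?_, rfl⟩, ?_⟩
      · rw [Finset.coe_subset]
        intro y hy
        have := hG (Finset.mem_of_mem_erase hy)
        rcases Finset.mem_insert.mp this with h | h
        · exact absurd (h ▸ hy) (Finset.notMem_erase x G)
        · exact h
      · exact (Finset.add_sum_erase G id hxG).symm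
    · left
      refine ⟨G, ?_, rfl⟩
      rw [Finset.coe_subset]
      intro y hy
      rcases Finset.mem_insert.mp (hG hy) with h | h
      · exact absurd (h ▸ hy) hxG
      · exact h
  · rintro (⟨G, hG, rfl⟩ | ⟨m, ⟨G, hG, rfl⟩, rfl⟩)
    · exact ⟨G, by rw [Finset.coe_subset] at *; exact hG.trans (Finset.subset_insert x F), rfl⟩
    · rw [Finset.coe_subset] at hG
      have hxG : x ∉ G := fun h => hx (hG h)
      refine ⟨insert x G, ?_, ?_⟩
      · rw [Finset.coe_subset]
        exact Finset.insert_subset_insert x hG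
      · rw [Finset.sum_insert hxG]

/-- Extending a finite set `F` with `P(F) = [0,C] \ {b₁, C−b₁}` by an element
`x` with `b₁ < x ≤ C−b₁`, `x ≠ C−2b₁` gives `P(F∪{x}) = [0,C+x] \ {b₁, C+x−b₁}`. -/
theorem stmt12 (b1 C : ℕ) (hb1 : 0 < b1) (hC : 2 * b1 < C)
    (F : Finset ℕ) (hFpos : ∀ y ∈ F, 0 < y)
    (hPF : subsetSums ↑F = Set.Icc 0 C \ {b1, C - b1})
    (x : ℕ) (hx : 0 < x) (hxF : x ∉ F) (hx1 : b1 < x) (hx2 : x ≤ C - b1)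
    (hx3 : x ≠ C - 2 * b1) :
    subsetSums ↑(insert x F) = Set.Icc 0 (C + x) \ {b1, C + x - b1} := by
  ext n
  rw [mem_subsetSums_insert x F hxF n]
  simp only [hPF, Set.mem_diff, Set.mem_Icc, Set.mem_insert_iff, Set.mem_singleton_iff]
  constructor
  · rintro (⟨⟨_, h1⟩, h2⟩ | ⟨m, ⟨⟨_, h1⟩, h2⟩, rfl⟩) <;> push_neg at h2 <;>
      exact ⟨⟨Nat.zero_le _, by omega⟩, by omega⟩
  · rintro ⟨⟨_, hle⟩, hne⟩
    push_neg at hne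
    by_cases h : n ≤ C ∧ n ≠ C - b1
    · left
      exact ⟨⟨Nat.zero_le _, h.1⟩, by push_neg; omega⟩
    · right
      push_neg at h
      exact ⟨n - x, ⟨⟨Nat.zero_le _, by omega⟩, by push_neg; omega⟩, by omega⟩
end

section
/- Let b1 and C be positive integers with C > 3·b1, and let F be a finite set of positive integers with P(F) = [0, C] \ {b1, C − b1}. If x = C − 2·b1 and x ∉ F, then P(F ∪ {x}) = [0, C + x] \ {b1, C − b1, C + x − b1}. -/
lemma subsetSums_insert_s13 {x : ℕ} {F : Finset ℕ} (hx : x ∉ F) (n : ℕ) :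
    n ∈ subsetSums ↑(insert x F) ↔
      n ∈ subsetSums ↑F ∨ ∃ m ∈ subsetSums ↑F, n = x + m := by
  constructor
  · rintro ⟨G, hG, rfl⟩
    by_cases hxG : x ∈ G
    · right
      refine ⟨∑ y ∈ G.erase x, y, ⟨G.erase x, ?_, rfl⟩, ?_⟩
      · intro y hy
        simp only [Finset.coe_erase, Set.mem_diff, Finset.mem_coe,
          Set.mem_singleton_iff] at hy
        have h2 := hG hy.1
        simp only [Finset.coe_insert, Set.mem_insert_iff, Finset.mem_coe] at h2
        rcases h2 with h | h
        · exact absurd h hy.2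
        · exact h
      · exact (Finset.add_sum_erase G id hxG).symm
    · left
      refine ⟨G, ?_, rfl⟩
      intro y hy
      have h2 := hG hy
      simp only [Finset.coe_insert, Set.mem_insert_iff, Finset.mem_coe] at h2 ⊢
      rcases h2 with h | h
      · subst h; exact absurd hy hxG
      · exact h
  · rintro (⟨G, hG, rfl⟩ | ⟨m, ⟨G, hG, rfl⟩, rfl⟩)
    · exact ⟨G, hG.trans (by simp), rfl⟩
    · have hxG : x ∉ G := fun h => hx (hG h)
      refine ⟨insert x G, ?_, ?_⟩
      · intro y hy
        simp only [Finset.coe_insert, Set.mem_insert_iff, Finset.mem_coe] at hy ⊢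
        rcases hy with h | h
        · exact Or.inl h
        · exact Or.inr (hG h)
      · rw [Finset.sum_insert hxG]

/-- Extending a finite set `F` with `P(F) = [0,C] \ {b₁, C−b₁}` by the element
`x = C − 2b₁` gives `P(F∪{x}) = [0,C+x] \ {b₁, C−b₁, C+x−b₁}`. -/
theorem stmt13 (b1 C : ℕ) (hb1 : 0 < b1) (hC : 3 * b1 < C)
    (F : Finset ℕ) (hFpos : ∀ y ∈ F, 0 < y)
    (hPF : subsetSums ↑F = Set.Icc 0 C \ {b1, C - b1})
    (x : ℕ) (hxval : x = C - 2 * b1) (hxF : x ∉ F) :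
    subsetSums ↑(insert x F) =
      Set.Icc 0 (C + x) \ {b1, C - b1, C + x - b1} := by
  ext n
  rw [subsetSums_insert_s13 hxF]
  simp only [hPF, Set.mem_diff, Set.mem_Icc, Set.mem_insert_iff,
    Set.mem_singleton_iff, not_or]
  constructor
  · rintro (⟨⟨-, h1⟩, h2, h3⟩ | ⟨m, ⟨⟨-, h1⟩, h2, h3⟩, rfl⟩) <;>
      refine ⟨⟨Nat.zero_le _, ?_⟩, ?_, ?_, ?_⟩ <;> omega
  · rintro ⟨⟨-, h1⟩, h2, h3, h4⟩
    by_cases hn : n ≤ C ∧ n ≠ C - b1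
    · exact Or.inl ⟨⟨Nat.zero_le _, hn.1⟩, h2, hn.2⟩
    · refine Or.inr ⟨n - x, ⟨⟨Nat.zero_le _, ?_⟩, ?_, ?_⟩, ?_⟩ <;> omega
end

section
/- Let b1 and D be positive integers with D > 2·b1, and let F be a finite set of positive integers with P(F) = [0, 2·D] \ {b1, D, 2·D − b1}. If y is a positive integer with y ∉ F and D − b1 < y ≤ D, then P(F ∪ {y}) = [0, 2·D + y] \ {b1, 2·D + y − b1}. -/
/-- Extending a finite set `F` with `P(F) = [0,2D] \ {b₁, D, 2D−b₁}` by an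
element `y` with `D−b₁ < y ≤ D` gives `P(F∪{y}) = [0,2D+y] \ {b₁, 2D+y−b₁}`. -/
theorem stmt14 (b1 D : ℕ) (hb1 : 0 < b1) (hD : 2 * b1 < D)
    (F : Finset ℕ) (hFpos : ∀ z ∈ F, 0 < z)
    (hPF : subsetSums ↑F = Set.Icc 0 (2 * D) \ {b1, D, 2 * D - b1})
    (y : ℕ) (hy : 0 < y) (hyF : y ∉ F) (hy1 : D - b1 < y) (hy2 : y ≤ D) :
    subsetSums ↑(insert y F) =
      Set.Icc 0 (2 * D + y) \ {b1, 2 * D + y - b1} := by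
  have hmem : ∀ m, m ∈ subsetSums (↑F : Set ℕ) ↔
      (m ≤ 2 * D ∧ m ≠ b1 ∧ m ≠ D ∧ m ≠ 2 * D - b1) := by
    intro m
    rw [hPF]
    simp only [Set.mem_diff, Set.mem_Icc, Set.mem_insert_iff, Set.mem_singleton_iff]
    constructor
    · rintro ⟨⟨_, h1⟩, h2⟩
      exact ⟨h1, fun h => h2 (Or.inl h), fun h => h2 (Or.inr (Or.inl h)),
        fun h => h2 (Or.inr (Or.inr h))⟩
    · rintro ⟨h1, h2, h3, h4⟩
      exact ⟨⟨Nat.zero_le _, h1⟩, by rintro (h | h | h) <;> tauto⟩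
  have hsplit : ∀ n, n ∈ subsetSums (↑(insert y F) : Set ℕ) ↔
      n ∈ subsetSums (↑F : Set ℕ) ∨ ∃ m ∈ subsetSums (↑F : Set ℕ), n = y + m := by
    intro n
    constructor
    · rintro ⟨G, hG, rfl⟩
      by_cases hyG : y ∈ G
      · right
        refine ⟨∑ x ∈ G.erase y, x, ⟨G.erase y, ?_, rfl⟩, ?_⟩
        · intro x hx
          have hx' : x ∈ G.erase y := hx
          have hxG : x ∈ G := Finset.mem_of_mem_erase hx'
          have := hG hxG
          simp only [Finset.coe_insert, Set.mem_insert_iff, Finset.mem_coe] at this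
          rcases this with h | h
          · exact absurd h (Finset.ne_of_mem_erase hx')
          · exact h
        · exact (Finset.add_sum_erase G (fun x => x) hyG).symm
      · left
        refine ⟨G, ?_, rfl⟩
        intro x hx
        have := hG hx
        simp only [Finset.coe_insert, Set.mem_insert_iff, Finset.mem_coe] at this
        rcases this with h | h
        · exact absurd (h ▸ hx) hyG
        · exact h
    · rintro (⟨G, hG, rfl⟩ | ⟨m, ⟨G, hG, rfl⟩, rfl⟩)
      · exact ⟨G, fun x hx => by
          simp only [Finset.coe_insert, Set.mem_insert_iff, Finset.mem_coe]
          exact Or.inr (hG hx), rfl⟩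
      · have hyG : y ∉ G := fun h => hyF (hG h)
        refine ⟨insert y G, ?_, ?_⟩
        · intro x hx
          simp only [Finset.coe_insert, Set.mem_insert_iff, Finset.mem_coe] at hx ⊢
          rcases hx with h | h
          · exact Or.inl h
          · exact Or.inr (hG h)
        · rw [Finset.sum_insert hyG]
  ext n
  simp only [Set.mem_diff, Set.mem_Icc, Set.mem_insert_iff, Set.mem_singleton_iff]
  rw [hsplit]
  constructor
  · rintro (h | ⟨m, hm, rfl⟩)
    · rw [hmem] at h
      constructor
      · omega
      · push_neg
        omega
    · rw [hmem] at hm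
      constructor
      · omega
      · push_neg
        omega
  · rintro ⟨⟨_, h1⟩, h2⟩
    push_neg at h2
    by_cases hc : n ≤ 2 * D ∧ n ≠ D ∧ n ≠ 2 * D - b1
    · left
      rw [hmem]
      omega
    · right
      refine ⟨n - y, ?_, ?_⟩
      · rw [hmem]
        omega
      · omega
end
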